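/- arXiv:2309.05004 — 5 statements merged into one kernel-verified Lean document; each statement's English description precedes it below -/
import Mathlib

section
/- Let K be a step-function kernel K(x,v,v') = Σ_{r=1}^R K_r(v,v') 1_{I_r}(x) with intervals I₁ = (−∞, a₁), I_r = [a_{r−1}, a_r) for r = 2,…,R−1, I_R = [a_{R−1}, ∞), and 0 ≤ K ≤ C_K. Let φ : ℝ × V → [0, C_φ] be measurable and uniformly continuous in x uniformly in v (for every ε > 0 there is δ' > 0 such that |x−y| < δ' implies |φ(x,v) − φ(y,v)| < ε for all v ∈ V). Let f be a bounded measurable mild solution of the homogeneous kinetic equation with initial datum φ. Then f is uniformly continuous in x uniformly in (t,v): for every ε > 0 there is δ > 0 such that |x−y| < δ implies |f(t,x,v) − f(t,y,v)| ≤ ε for all t ∈ [0,T] and v ∈ V. -/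
/-!
Follow the characteristics `s ↦ x - v (t - s)` and `s ↦ y - v (t - s)` backwards from time `t`.
They stay at distance `|x - y|`, so they are separated by one of the `R - 1` jump points of the
step kernel only for `s` in a set of measure at most `2 (R - 1) |x - y|`; there the collision terms
differ by at most `8 C_K ‖f‖_∞`. Elsewhere the kernels agree and the collision terms differ by at
most `4 C_K` times the spatial modulus of continuity of `f` at time `s`. Hence the modulus `ω(t)`
at scale `δ` satisfies `ω(t) ≤ ω_φ(δ) + C δ + 4 C_K ∫₀ᵗ ω`, and Gronwall's inequality gives
`ω(t) ≤ (ω_φ(δ) + C δ) e^{4 C_K T}`, which is small for small `δ`.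
-/

open MeasureTheory Real Set Filter

noncomputable section

/-- Bounded measurable mild solution of the forward kinetic equation
`∂ₜ f + v ∂ₓ f = 𝒦(f) + h`, `f(0,·,·)=φ`, on `[0,T] × ℝ × {−1,1}` (velocity set `V = {−1,1}`
with counting measure). -/
def IsMildF (T : ℝ) (K : ℝ → ℝ → ℝ → ℝ) (φ : ℝ → ℝ → ℝ)
    (h f : ℝ → ℝ → ℝ → ℝ) : Prop :=
  (Measurable fun p : ℝ × ℝ × ℝ => f p.1 p.2.1 p.2.2) ∧
  (∃ C : ℝ, ∀ t x v, |f t x v| ≤ C) ∧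
  ∀ t ∈ Set.Icc (0 : ℝ) T, ∀ x : ℝ, ∀ v ∈ ({1, -1} : Set ℝ),
    f t x v = φ (x - v * t) v +
      ∫ s in (0 : ℝ)..t,
        (K (x - v * (t - s)) v 1 * f s (x - v * (t - s)) 1
          + K (x - v * (t - s)) v (-1) * f s (x - v * (t - s)) (-1)
          - (K (x - v * (t - s)) 1 v + K (x - v * (t - s)) (-1) v)
              * f s (x - v * (t - s)) v
          + h s (x - v * (t - s)) v)

/-- Mild solution (measurable, with finite `L¹ₓ` norms uniformly in `t,v`) of the backward
equation `−∂ₜ g − v ∂ₓ g = α L̃(g) − σ g + h`, `g(T,·,·)=ψ`, where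
`σ(x,v) = Σ_{v'∈V} K(x,v',v)` and `L̃(g)(t,x,v) = Σ_{v'∈V} K(x,v',v) g(t,x,v')`. -/
def IsMildG (T : ℝ) (K : ℝ → ℝ → ℝ → ℝ) (α : ℝ) (ψ : ℝ → ℝ → ℝ)
    (h g : ℝ → ℝ → ℝ → ℝ) : Prop :=
  (Measurable fun p : ℝ × ℝ × ℝ => g p.1 p.2.1 p.2.2) ∧
  (∀ t ∈ Set.Icc (0 : ℝ) T, ∀ v ∈ ({1, -1} : Set ℝ),
    Integrable (fun x => g t x v)) ∧
  (∃ C : ℝ, ∀ t ∈ Set.Icc (0 : ℝ) T, ∀ v ∈ ({1, -1} : Set ℝ),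
    (∫ x : ℝ, |g t x v|) ≤ C) ∧
  ∀ t ∈ Set.Icc (0 : ℝ) T, ∀ x : ℝ, ∀ v ∈ ({1, -1} : Set ℝ),
    g t x v = ψ (x + v * (T - t)) v +
      ∫ s in t..T,
        (α * (K (x + v * (s - t)) 1 v * g s (x + v * (s - t)) 1
              + K (x + v * (s - t)) (-1) v * g s (x + v * (s - t)) (-1))
          - (K (x + v * (s - t)) 1 v + K (x + v * (s - t)) (-1) v)
              * g s (x + v * (s - t)) v
          + h s (x + v * (s - t)) v)

/-- Bounded measurable mild solution of the backward/adjoint equation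
`−∂ₜ g − v ∂ₓ g = α L̃(g) − σ g + h`, `g(T,·,·)=ψ`. -/
def IsMildGb (T : ℝ) (K : ℝ → ℝ → ℝ → ℝ) (α : ℝ) (ψ : ℝ → ℝ → ℝ)
    (h g : ℝ → ℝ → ℝ → ℝ) : Prop :=
  (Measurable fun p : ℝ × ℝ × ℝ => g p.1 p.2.1 p.2.2) ∧
  (∃ C : ℝ, ∀ t x v, |g t x v| ≤ C) ∧
  ∀ t ∈ Set.Icc (0 : ℝ) T, ∀ x : ℝ, ∀ v ∈ ({1, -1} : Set ℝ),
    g t x v = ψ (x + v * (T - t)) v +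
      ∫ s in t..T,
        (α * (K (x + v * (s - t)) 1 v * g s (x + v * (s - t)) 1
              + K (x + v * (s - t)) (-1) v * g s (x + v * (s - t)) (-1))
          - (K (x + v * (s - t)) 1 v + K (x + v * (s - t)) (-1) v)
              * g s (x + v * (s - t)) v
          + h s (x + v * (s - t)) v)

theorem measurable_of_forall_le_iff_imp_eq {ι β : Type*} [MeasurableSpace β] (S : Finset ι)
    (a : ι → ℝ) {g : ℝ → β} (hg : ∀ x y, (∀ r ∈ S, a r ≤ x ↔ a r ≤ y) → g x = g y) :
    Measurable g := by
  let P : ℝ → S → Prop := fun x r => a r ≤ x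
  have hP : Measurable P :=
    measurable_pi_lambda _ fun r => measurableSet_setOfPred.1 measurableSet_Ici
  have hgP : g = (g ∘ Function.invFun P) ∘ P := by
    funext x
    refine hg _ _ fun r hr => ?_
    exact Iff.of_eq (congrFun (Function.invFun_eq ⟨x, rfl⟩ : P _ = P x) ⟨r, hr⟩).symm
  rw [hgP]
  exact (measurable_of_countable _).comp hP

theorem abs_sub_le_of_not_le_iff_le {a x y : ℝ} (h : ¬(a ≤ x ↔ a ≤ y)) : |x - a| ≤ |x - y| := by
  rcases le_or_gt a x with hx | hx <;> rcases le_or_gt a y with hy | hy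
  · exact absurd (iff_of_true hx hy) h
  · exact abs_le_abs (by linarith) (by linarith)
  · rw [abs_sub_comm x a, abs_sub_comm x y]
    exact abs_le_abs (by linarith) (by linarith)
  · exact absurd (iff_of_false hx.not_ge hy.not_ge) h

theorem intervalIntegral_le_mul_measureReal_add {F G : ℝ → ℝ} {E : Set ℝ} {C t : ℝ}
    (hE : MeasurableSet E) (hEfin : volume E ≠ ⊤) (hC : 0 ≤ C) (ht : 0 ≤ t)
    (hF : IntervalIntegrable F volume 0 t) (hG : IntervalIntegrable G volume 0 t)
    (hFG : ∀ s ∈ Icc 0 t, F s ≤ E.indicator (fun _ => C) s + G s) :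
    ∫ s in (0 : ℝ)..t, F s ≤ C * volume.real E + ∫ s in (0 : ℝ)..t, G s := by
  have hind : IntervalIntegrable (E.indicator fun _ => C) volume 0 t :=
    intervalIntegrable_const.mono_fun' (measurable_const.indicator hE).aestronglyMeasurable
      (ae_of_all _ fun s => norm_indicator_le_norm_self _ s)
  have hindE : ∫ s in (0 : ℝ)..t, E.indicator (fun _ => C) s ≤ C * volume.real E := by
    rw [intervalIntegral.integral_of_le ht, setIntegral_indicator hE, setIntegral_const,
      smul_eq_mul, mul_comm]
    exact mul_le_mul_of_nonneg_left (measureReal_mono inter_subset_right hEfin) hC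
  calc ∫ s in (0 : ℝ)..t, F s ≤ ∫ s in (0 : ℝ)..t, (E.indicator (fun _ => C) s + G s) :=
        intervalIntegral.integral_mono_on ht hF (hind.add hG) hFG
    _ ≤ C * volume.real E + ∫ s in (0 : ℝ)..t, G s := by
        rw [intervalIntegral.integral_add hind hG]
        gcongr

theorem measureReal_biUnion_closedBall_le {ι : Type*} (S : Finset ι) (z : ι → ℝ) {d : ℝ}
    (hd : 0 ≤ d) : volume.real (⋃ r ∈ S, Metric.closedBall (z r) d) ≤ S.card * (2 * d) := by
  calc volume.real (⋃ r ∈ S, Metric.closedBall (z r) d)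
      ≤ ∑ r ∈ S, volume.real (Metric.closedBall (z r) d) := measureReal_biUnion_finset_le _ _
    _ = S.card * (2 * d) := by simp [Real.volume_real_closedBall hd]

theorem add_mul_integral_exp_add_pow_div_factorial (η c M t : ℝ) (m : ℕ) :
    η + c * ∫ s in (0 : ℝ)..t, (η * exp (c * s) + M * ((c * s) ^ m / m.factorial)) =
      η * exp (c * t) + M * ((c * t) ^ (m + 1) / (m + 1).factorial) := by
  have hderiv : ∀ s, HasDerivAt
      (fun s => η * exp (c * s) + M * ((c * s) ^ (m + 1) / (m + 1).factorial))
      (c * (η * exp (c * s) + M * ((c * s) ^ m / m.factorial))) s := by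
    intro s
    have hcs : HasDerivAt (fun s => c * s) c s := by simpa using (hasDerivAt_id' s).const_mul c
    refine ((hcs.exp.const_mul η).add
      ((hcs.pow (m + 1)).div_const ((m + 1).factorial : ℝ) |>.const_mul M)).congr_deriv ?_
    rw [Nat.factorial_succ]
    push_cast
    field_simp
  rw [← intervalIntegral.integral_const_mul,
    intervalIntegral.integral_eq_sub_of_hasDerivAt (fun s _ => hderiv s)
      (Continuous.intervalIntegrable (by fun_prop) _ _)]
  simp

/-- Gronwall's inequality, proved by Picard iteration. It is stated for a family `u` rather than
for its pointwise supremum, which need not be measurable. -/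
theorem le_mul_exp_of_forall_le_add_integral {ι : Type*} {u : ι → ℝ → ℝ} {T c η M : ℝ}
    (hη : 0 ≤ η) (hM : ∀ i, ∀ t ∈ Icc 0 T, u i t ≤ M)
    (hstep : ∀ B : ℝ → ℝ, Continuous B → (∀ i, ∀ s ∈ Icc 0 T, u i s ≤ B s) →
      ∀ i, ∀ t ∈ Icc 0 T, u i t ≤ η + c * ∫ s in (0 : ℝ)..t, B s)
    (i : ι) {t : ℝ} (ht : t ∈ Icc 0 T) : u i t ≤ η * exp (c * t) := by
  -- the `m`-th iterate of `B ↦ η + c ∫₀ᵗ B` on `η e^{ct} + M`, whose first term is a fixed point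
  have hiter : ∀ m : ℕ, ∀ i, ∀ t ∈ Icc 0 T,
      u i t ≤ η * exp (c * t) + M * ((c * t) ^ m / m.factorial) := by
    intro m
    induction m with
    | zero =>
      intro i t ht
      simpa using (hM i t ht).trans (le_add_of_nonneg_left (by positivity))
    | succ m ih =>
      intro i t ht
      rw [← add_mul_integral_exp_add_pow_div_factorial]
      exact hstep _ (by fun_prop) ih i t ht
  have hlim : Tendsto (fun m : ℕ => η * exp (c * t) + M * ((c * t) ^ m / m.factorial)) atTop
      (nhds (η * exp (c * t))) := by
    simpa using ((FloorSemiring.tendsto_pow_div_factorial_atTop (c * t)).const_mul M).const_add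
      (η * exp (c * t))
  exact ge_of_tendsto' hlim fun m => hiter m i t ht

/-- `𝒦(f)(s, w, v)` for the velocity profile `g = f s w`. -/
def collisionOp (K : ℝ → ℝ → ℝ → ℝ) (w : ℝ) (g : ℝ → ℝ) (v : ℝ) : ℝ :=
  K w v 1 * g 1 + K w v (-1) * g (-1) - (K w 1 v + K w (-1) v) * g v

theorem collisionOp_sub (K : ℝ → ℝ → ℝ → ℝ) (w : ℝ) (g g' : ℝ → ℝ) (v : ℝ) :
    collisionOp K w g v - collisionOp K w g' v = collisionOp K w (g - g') v := by
  simp only [collisionOp, Pi.sub_apply]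
  ring

theorem abs_collisionOp_le {K : ℝ → ℝ → ℝ → ℝ} {CK B w v : ℝ} {g : ℝ → ℝ}
    (hK : ∀ u u', |K w u u'| ≤ CK) (hv : v ∈ ({1, -1} : Set ℝ))
    (hg : ∀ u ∈ ({1, -1} : Set ℝ), |g u| ≤ B) : |collisionOp K w g v| ≤ 4 * CK * B := by
  have hterm : ∀ u, ∀ u' ∈ ({1, -1} : Set ℝ), |K w u u' * g u'| ≤ CK * B := fun u u' hu' => by
    rw [abs_mul]
    exact mul_le_mul (hK u u') (hg u' hu') (abs_nonneg _) ((abs_nonneg _).trans (hK u u'))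
  have h₁ := abs_le.1 (hterm v 1 (by simp))
  have h₂ := abs_le.1 (hterm v (-1) (by simp))
  have h₃ := abs_le.1 (hterm 1 v hv)
  have h₄ := abs_le.1 (hterm (-1) v hv)
  rw [collisionOp, add_mul, abs_le]
  constructor <;> linarith [h₁.1, h₁.2, h₂.1, h₂.2, h₃.1, h₃.2, h₄.1, h₄.2]

theorem intervalIntegrable_collisionOp {K : ℝ → ℝ → ℝ → ℝ} {CK M : ℝ}
    (hKm : ∀ u u', Measurable fun w => K w u u') (hK : ∀ w u u', |K w u u'| ≤ CK)
    {G : ℝ → ℝ → ℝ} (hGm : ∀ u, Measurable fun s => G s u) (hGM : ∀ s u, |G s u| ≤ M)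
    {X : ℝ → ℝ} (hX : Measurable X) {v : ℝ} (hv : v ∈ ({1, -1} : Set ℝ)) (t₀ t₁ : ℝ) :
    IntervalIntegrable (fun s => collisionOp K (X s) (G s) v) volume t₀ t₁ := by
  have hKX : ∀ u u', Measurable fun s => K (X s) u u' := fun u u' => (hKm u u').comp hX
  have hm : Measurable fun s => collisionOp K (X s) (G s) v := by
    unfold collisionOp
    fun_prop
  exact intervalIntegrable_const.mono_fun' hm.aestronglyMeasurable
    (ae_of_all _ fun s => abs_collisionOp_le (hK (X s)) hv fun u _ => hGM s u)

theorem mem_closedBall_of_not_le_iff_le {a v x y t s : ℝ} (hv : v ∈ ({1, -1} : Set ℝ))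
    (h : ¬(a ≤ x - v * (t - s) ↔ a ≤ y - v * (t - s))) :
    s ∈ Metric.closedBall (t + v * (a - x)) |x - y| := by
  have hv2 : v * v = 1 := by rcases hv with rfl | rfl <;> norm_num
  have hv1 : |v| = 1 := by rcases hv with rfl | rfl <;> norm_num
  rw [Metric.mem_closedBall, Real.dist_eq]
  calc |s - (t + v * (a - x))| = |v * (x - v * (t - s) - a)| := by
        congr 1; linear_combination (t - s) * hv2
    _ = |x - v * (t - s) - a| := by rw [abs_mul, hv1, one_mul]
    _ ≤ |x - y| := by simpa using abs_sub_le_of_not_le_iff_le h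

section StepKernel

variable {ι : Type*} {S : Finset ι} {a : ι → ℝ} {K : ℝ → ℝ → ℝ → ℝ} {CK : ℝ}

/-- Off the union of balls the two characteristic points lie in the same cell of the step
kernel, so only the velocity profiles differ. -/
theorem abs_collisionOp_sub_le_indicator_add
    (hK_step : ∀ x y : ℝ, (∀ r ∈ S, (a r ≤ x ↔ a r ≤ y)) → ∀ v v', K x v v' = K y v v')
    (hK : ∀ x v v', |K x v v'| ≤ CK) {M B v : ℝ} (hv : v ∈ ({1, -1} : Set ℝ)) {g g' : ℝ → ℝ}
    (hg : ∀ u, |g u| ≤ M) (hg' : ∀ u, |g' u| ≤ M)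
    (hgg' : ∀ u ∈ ({1, -1} : Set ℝ), |g u - g' u| ≤ B) (x y t s : ℝ) :
    |collisionOp K (x - v * (t - s)) g v - collisionOp K (y - v * (t - s)) g' v| ≤
      (⋃ r ∈ S, Metric.closedBall (t + v * (a r - x)) |x - y|).indicator (fun _ => 8 * CK * M) s
        + 4 * CK * B := by
  by_cases hs : s ∈ ⋃ r ∈ S, Metric.closedBall (t + v * (a r - x)) |x - y|
  · have hCK : 0 ≤ CK := (abs_nonneg _).trans (hK 0 0 0)
    have hB : 0 ≤ B := (abs_nonneg _).trans (hgg' v hv)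
    have hx := abs_collisionOp_le (hK (x - v * (t - s))) hv fun u _ => hg u
    have hy := abs_collisionOp_le (hK (y - v * (t - s))) hv fun u _ => hg' u
    rw [indicator_of_mem hs]
    nlinarith [abs_sub (collisionOp K (x - v * (t - s)) g v) (collisionOp K (y - v * (t - s)) g' v)]
  · have hsame : ∀ r ∈ S, a r ≤ x - v * (t - s) ↔ a r ≤ y - v * (t - s) := fun r hr =>
      by_contra fun h => hs (mem_biUnion hr (mem_closedBall_of_not_le_iff_le hv h))
    have hK_eq : collisionOp K (y - v * (t - s)) g' v = collisionOp K (x - v * (t - s)) g' v := by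
      simp only [collisionOp, hK_step _ _ hsame]
    rw [indicator_of_notMem hs, zero_add, hK_eq, collisionOp_sub]
    exact abs_collisionOp_le (hK _) hv hgg'

theorem abs_sub_le_of_isMildF {T M δ : ℝ} {φ : ℝ → ℝ → ℝ} {f : ℝ → ℝ → ℝ → ℝ}
    (hK_step : ∀ x y : ℝ, (∀ r ∈ S, (a r ≤ x ↔ a r ≤ y)) → ∀ v v', K x v v' = K y v v')
    (hK : ∀ x v v', |K x v v'| ≤ CK)
    (hf : IsMildF T K φ (fun _ _ _ => 0) f) (hM : ∀ t x v, |f t x v| ≤ M)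
    {B : ℝ → ℝ}
    (hfB : ∀ s ∈ Icc 0 T, ∀ u ∈ ({1, -1} : Set ℝ), ∀ x y : ℝ, |x - y| < δ →
      |f s x u - f s y u| ≤ B s)
    {t : ℝ} (ht : t ∈ Icc 0 T) (hB : IntervalIntegrable B volume 0 t) {v : ℝ}
    (hv : v ∈ ({1, -1} : Set ℝ)) {x y : ℝ} (hxy : |x - y| < δ) :
    |f t x v - f t y v| ≤ |φ (x - v * t) v - φ (y - v * t) v| + 16 * CK * M * S.card * δ
      + 4 * CK * ∫ s in (0 : ℝ)..t, B s := by
  obtain ⟨hfm, -, hmild⟩ := hf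
  set Q : ℝ → ℝ → ℝ := fun z s => collisionOp K (z - v * (t - s)) (f s (z - v * (t - s))) v
  set Bad := ⋃ r ∈ S, Metric.closedBall (t + v * (a r - x)) |x - y|
  have hCK : 0 ≤ CK := (abs_nonneg _).trans (hK 0 0 0)
  have hM0 : 0 ≤ M := (abs_nonneg _).trans (hM 0 0 0)
  have hmildQ : ∀ z, f t z v = φ (z - v * t) v + ∫ s in (0 : ℝ)..t, Q z s := fun z =>
    (hmild t ht z v hv).trans (by simp only [add_zero]; rfl)
  have hQint : ∀ z, IntervalIntegrable (Q z) volume 0 t := fun z =>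
    intervalIntegrable_collisionOp
      (fun u u' => measurable_of_forall_le_iff_imp_eq S a fun w w' h => hK_step w w' h u u') hK
      (fun u => hfm.comp (measurable_id.prodMk
        ((by fun_prop : Measurable fun s : ℝ => z - v * (t - s)).prodMk measurable_const)))
      (fun s u => hM s _ u) (by fun_prop) hv 0 t
  have hBadm : MeasurableSet Bad := S.measurableSet_biUnion fun r _ => measurableSet_closedBall
  have hBadfin : volume Bad ≠ ⊤ := ((Bornology.isBounded_biUnion_finset S).2 fun r _ =>
    Metric.isBounded_closedBall).measure_lt_top.ne
  have hBad : volume.real Bad ≤ S.card * (2 * δ) :=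
    (measureReal_biUnion_closedBall_le S _ (abs_nonneg _)).trans (by gcongr)
  have hQQ : ∫ s in (0 : ℝ)..t, |Q x s - Q y s| ≤
      8 * CK * M * volume.real Bad + ∫ s in (0 : ℝ)..t, 4 * CK * B s :=
    intervalIntegral_le_mul_measureReal_add hBadm hBadfin (by positivity) ht.1
      ((hQint x).sub (hQint y)).abs (hB.const_mul _)
      fun s hs => abs_collisionOp_sub_le_indicator_add hK_step hK hv (fun u => hM s _ u)
        (fun u => hM s _ u)
        (fun u hu => hfB s ⟨hs.1, hs.2.trans ht.2⟩ u hu _ _ (by simpa using hxy)) x y t s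
  rw [intervalIntegral.integral_const_mul] at hQQ
  calc |f t x v - f t y v|
      = |(φ (x - v * t) v - φ (y - v * t) v) + ∫ s in (0 : ℝ)..t, (Q x s - Q y s)| := by
        rw [hmildQ x, hmildQ y, intervalIntegral.integral_sub (hQint x) (hQint y)]
        ring_nf
    _ ≤ |φ (x - v * t) v - φ (y - v * t) v| + ∫ s in (0 : ℝ)..t, |Q x s - Q y s| :=
        (abs_add_le _ _).trans (by gcongr; exact intervalIntegral.abs_integral_le_integral_abs ht.1)
    _ ≤ _ := by nlinarith [mul_le_mul_of_nonneg_left hBad (by positivity : 0 ≤ 8 * CK * M)]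

theorem abs_sub_le_mul_exp_of_isMildF {T M δ η : ℝ} {φ : ℝ → ℝ → ℝ} {f : ℝ → ℝ → ℝ → ℝ}
    (hK_step : ∀ x y : ℝ, (∀ r ∈ S, (a r ≤ x ↔ a r ≤ y)) → ∀ v v', K x v v' = K y v v')
    (hK : ∀ x v v', |K x v v'| ≤ CK)
    (hf : IsMildF T K φ (fun _ _ _ => 0) f) (hM : ∀ t x v, |f t x v| ≤ M) (hη : 0 ≤ η)
    (hφ : ∀ x y : ℝ, |x - y| < δ → ∀ v ∈ ({1, -1} : Set ℝ),
      |φ x v - φ y v| + 16 * CK * M * S.card * δ ≤ η)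
    {t : ℝ} (ht : t ∈ Icc 0 T) {v : ℝ} (hv : v ∈ ({1, -1} : Set ℝ)) {x y : ℝ}
    (hxy : |x - y| < δ) :
    |f t x v - f t y v| ≤ η * exp (4 * CK * t) := by
  let ι := {p : ℝ × ℝ × ℝ // |p.1 - p.2.1| < δ ∧ p.2.2 ∈ ({1, -1} : Set ℝ)}
  refine le_mul_exp_of_forall_le_add_integral
    (u := fun (p : ι) s => |f s p.1.1 p.1.2.2 - f s p.1.2.1 p.1.2.2|) (M := 2 * M) hη
    (fun p s _ => (abs_sub _ _).trans (by linarith [hM s p.1.1 p.1.2.2, hM s p.1.2.1 p.1.2.2]))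
    ?_ ⟨(x, y, v), hxy, hv⟩ ht
  rintro B hB hBu ⟨⟨x, y, v⟩, hxy, hv⟩ t ht
  dsimp only at hxy hv ⊢
  have hstep := abs_sub_le_of_isMildF hK_step hK hf hM
    (fun s hs u hu x y hxy => hBu ⟨(x, y, u), hxy, hu⟩ s hs) ht (hB.intervalIntegrable _ _) hv hxy
  have hφxy := hφ (x - v * t) (y - v * t) (by simpa using hxy) v hv
  linarith

end StepKernel

theorem uniform_continuity_propagation_general
    (T CK : ℝ)
    (R : ℕ) (a : ℕ → ℝ)
    (K : ℝ → ℝ → ℝ → ℝ)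
    (hK_step : ∀ x y : ℝ, (∀ r ∈ Finset.Icc 1 (R - 1), (a r ≤ x ↔ a r ≤ y)) →
      ∀ v v', K x v v' = K y v v')
    (hK_nonneg : ∀ x v v', 0 ≤ K x v v')
    (hK_bdd : ∀ x v v', K x v v' ≤ CK)
    (φ : ℝ → ℝ → ℝ)
    (hφ_uc : ∀ ε > (0 : ℝ), ∃ δ > (0 : ℝ), ∀ x y : ℝ, |x - y| < δ →
      ∀ v ∈ ({1, -1} : Set ℝ), |φ x v - φ y v| < ε)
    (f : ℝ → ℝ → ℝ → ℝ)
    (hf : IsMildF T K φ (fun _ _ _ => 0) f) :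
    ∀ ε > (0 : ℝ), ∃ δ > (0 : ℝ), ∀ t ∈ Set.Icc (0 : ℝ) T, ∀ v ∈ ({1, -1} : Set ℝ),
      ∀ x y : ℝ, |x - y| < δ → |f t x v - f t y v| ≤ ε := by
  obtain ⟨M, hM⟩ := hf.2.1
  have hM0 : 0 ≤ M := (abs_nonneg _).trans (hM 0 0 0)
  have hK : ∀ x v v', |K x v v'| ≤ CK := fun x v v' =>
    abs_le.2 ⟨by linarith [hK_nonneg x v v', hK_bdd x v v'], hK_bdd x v v'⟩
  have hCK : 0 ≤ CK := (hK_nonneg 0 0 0).trans (hK_bdd 0 0 0)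
  intro ε hε
  set η := ε * exp (-(4 * CK * T))
  obtain ⟨δφ, hδφ, hφδ⟩ := hφ_uc (η / 2) (by positivity)
  obtain ⟨δq, hδq, hqδ⟩ :=
    exists_pos_mul_lt (by positivity : 0 < η / 2) (16 * CK * M * (Finset.Icc 1 (R - 1)).card)
  refine ⟨min δφ δq, lt_min hδφ hδq, fun t ht v hv x y hxy => ?_⟩
  have hφ : ∀ x y : ℝ, |x - y| < min δφ δq → ∀ v ∈ ({1, -1} : Set ℝ),
      |φ x v - φ y v| + 16 * CK * M * (Finset.Icc 1 (R - 1)).card * min δφ δq ≤ η :=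
    fun x y hxy v hv => by
      have hq := mul_le_mul_of_nonneg_left (min_le_right δφ δq)
        (by positivity : 0 ≤ 16 * CK * M * (Finset.Icc 1 (R - 1)).card)
      linarith [hφδ x y (hxy.trans_le (min_le_left _ _)) v hv]
  calc |f t x v - f t y v| ≤ η * exp (4 * CK * t) :=
        abs_sub_le_mul_exp_of_isMildF hK_step hK hf hM (by positivity) hφ ht hv hxy
    _ ≤ η * exp (4 * CK * T) := by gcongr; exact ht.2
    _ = ε := by rw [mul_assoc, ← exp_add]; simp

/-- if the kernel is a step function in `x` (piecewise constant with respect to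
the partition `(−∞,a₁), [a₁,a₂), …, [a_{R−1},∞)`) and the initial datum `φ` with values in
`[0,C_φ]` is uniformly continuous in `x` uniformly in `v`, then every bounded measurable
mild solution `f` of the homogeneous kinetic equation is uniformly continuous in `x`,
uniformly in `(t,v) ∈ [0,T] × V`. -/
theorem uniform_continuity_propagation
    (T CK Cφ : ℝ) (hT : 0 < T) (hCK : 0 < CK) (hCφ : 0 ≤ Cφ)
    (R : ℕ) (hR : 1 ≤ R) (a : ℕ → ℝ)
    (ha : StrictMonoOn a (Set.Icc 1 (R - 1)))
    (K : ℝ → ℝ → ℝ → ℝ)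
    (hK_step : ∀ x y : ℝ, (∀ r ∈ Finset.Icc 1 (R - 1), (a r ≤ x ↔ a r ≤ y)) →
      ∀ v v', K x v v' = K y v v')
    (hK_nonneg : ∀ x v v', 0 ≤ K x v v')
    (hK_bdd : ∀ x v v', K x v v' ≤ CK)
    (φ : ℝ → ℝ → ℝ)
    (hφ_meas : Measurable fun p : ℝ × ℝ => φ p.1 p.2)
    (hφ_bds : ∀ x : ℝ, ∀ v ∈ ({1, -1} : Set ℝ), 0 ≤ φ x v ∧ φ x v ≤ Cφ)
    (hφ_uc : ∀ ε > (0 : ℝ), ∃ δ > (0 : ℝ), ∀ x y : ℝ, |x - y| < δ →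
      ∀ v ∈ ({1, -1} : Set ℝ), |φ x v - φ y v| < ε)
    (f : ℝ → ℝ → ℝ → ℝ)
    (hf : IsMildF T K φ (fun _ _ _ => 0) f) :
    ∀ ε > (0 : ℝ), ∃ δ > (0 : ℝ), ∀ t ∈ Set.Icc (0 : ℝ) T, ∀ v ∈ ({1, -1} : Set ℝ),
      ∀ x y : ℝ, |x - y| < δ → |f t x v - f t y v| ≤ ε :=
  uniform_continuity_propagation_general T CK R a K hK_step hK_nonneg hK_bdd φ hφ_uc f hf
end
end

section
/- Let K be measurable with 0 ≤ K ≤ C_K, let f be a bounded measurable mild solution of the homogeneous kinetic equation with initial datum φ, 0 ≤ φ ≤ C_φ, and let g be a mild solution of the adjoint kinetic equation −∂_t g − v ∂_x g = L̃(g) − σ g with final datum g(T,x,v) = μ(x), where μ ∈ L¹(ℝ) and ‖μ‖_{L¹} ≤ C_μ. Then for every measurable set I ⊆ ℝ and all v, v' ∈ V (the entries of the adjoint representation of the measurement gradient satisfy): |∫₀^T ∫_I f(t,x,v') (g(t,x,v') − g(t,x,v)) dx dt| ≤ 2 C_φ C_μ T e^{4 C_K T}. -/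
/-!
The collision term of either equation is bounded by `4 C_K` times the size of the solution, so
Grönwall's inequality applied to the mild formulations gives `|f(t,x,v)| ≤ C_φ e^{4 C_K t}` and
`‖g(t,·,v)‖_{L¹} ≤ C_μ e^{4 C_K (T - t)}`; for `g` the spatial integral of the characteristic
shifts `x + v (s - t)` is handled by Tonelli and translation invariance of Lebesgue measure.
At each time the inner integral is then at most
`C_φ e^{4 C_K t} · 2 C_μ e^{4 C_K (T - t)} = 2 C_φ C_μ e^{4 C_K T}`, and the time integral
contributes the factor `T`.
-/

open MeasureTheory Real Set Filter

noncomputable section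

open Topology

open Finset in
/-- The `n`-th Picard iterate of `u = A + ∫₀ᵗ L u`, started from the constant `B`. -/
def picardIterate (L A B : ℝ) (n : ℕ) (t : ℝ) : ℝ :=
  A * ∑ k ∈ range n, (L * t) ^ k / k.factorial + B * ((L * t) ^ n / n.factorial)

theorem continuous_picardIterate (L A B : ℝ) (n : ℕ) : Continuous (picardIterate L A B n) := by
  unfold picardIterate; fun_prop

theorem integral_mul_pow_div_factorial (L t : ℝ) (k : ℕ) :
    ∫ s in (0 : ℝ)..t, L * ((L * s) ^ k / k.factorial)
      = (L * t) ^ (k + 1) / (k + 1).factorial := by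
  have hpow : ∀ s : ℝ, L * ((L * s) ^ k / k.factorial) = L ^ (k + 1) / k.factorial * s ^ k :=
    fun s => by ring
  simp only [hpow, intervalIntegral.integral_const_mul, integral_pow, Nat.factorial_succ]
  push_cast
  field_simp
  ring

theorem add_integral_picardIterate (L A B : ℝ) (n : ℕ) (t : ℝ) :
    A + ∫ s in (0 : ℝ)..t, L * picardIterate L A B n s = picardIterate L A B (n + 1) t := by
  have hint : ∀ (c : ℝ) (k : ℕ),
      IntervalIntegrable (fun s => c * (L * ((L * s) ^ k / k.factorial))) volume 0 t :=
    fun c k => by apply Continuous.intervalIntegrable; fun_prop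
  have hsplit : (fun s => L * picardIterate L A B n s) = fun s =>
      ∑ k ∈ Finset.range n, A * (L * ((L * s) ^ k / k.factorial))
        + B * (L * ((L * s) ^ n / n.factorial)) := by
    ext s
    simp only [picardIterate, mul_add, Finset.mul_sum]
    congr 1
    · exact Finset.sum_congr rfl fun k _ => by ring
    · ring
  have hterm : ∀ (c : ℝ) (k : ℕ), ∫ s in (0 : ℝ)..t, c * (L * ((L * s) ^ k / k.factorial))
      = c * ((L * t) ^ (k + 1) / (k + 1).factorial) := fun c k => by
    rw [intervalIntegral.integral_const_mul, integral_mul_pow_div_factorial]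
  rw [hsplit, intervalIntegral.integral_add (by apply Continuous.intervalIntegrable; fun_prop)
    (hint B n), intervalIntegral.integral_finsetSum fun k _ => hint A k]
  simp only [hterm, picardIterate, Finset.sum_range_succ' _ n, ← Finset.mul_sum]
  simp only [pow_zero, Nat.factorial_zero, Nat.cast_one, div_one]
  ring

theorem le_mul_exp_of_forall_le_picardIterate {L A B t y : ℝ} (hA : 0 ≤ A) (hLt : 0 ≤ L * t)
    (hy : ∀ n, y ≤ picardIterate L A B n t) : y ≤ A * exp (L * t) := by
  have hlim : Tendsto (fun n : ℕ => A * exp (L * t) + B * ((L * t) ^ n / n.factorial)) atTop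
      (𝓝 (A * exp (L * t))) := by
    simpa using tendsto_const_nhds.add
      ((FloorSemiring.tendsto_pow_div_factorial_atTop (L * t)).const_mul B)
  refine ge_of_tendsto hlim (Eventually.of_forall fun n => (hy n).trans ?_)
  unfold picardIterate
  gcongr
  exact sum_le_exp_of_nonneg hLt n

/-- Grönwall's inequality, in a form that only tests the integral inequality against
continuous majorants, so that no measurability of `u` is needed. -/
theorem le_mul_exp_of_le_add_integral {α : Type*} {T L A B : ℝ} (hL : 0 ≤ L) (hA : 0 ≤ A)
    {u : ℝ → α → ℝ} (hB : ∀ t ∈ Icc 0 T, ∀ a, u t a ≤ B)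
    (hu : ∀ w : ℝ → ℝ, Continuous w → (∀ s ∈ Icc 0 T, ∀ a, u s a ≤ w s) →
      ∀ t ∈ Icc 0 T, ∀ a, u t a ≤ A + ∫ s in (0 : ℝ)..t, L * w s) :
    ∀ t ∈ Icc 0 T, ∀ a, u t a ≤ A * exp (L * t) := by
  have hiter : ∀ n, ∀ t ∈ Icc 0 T, ∀ a, u t a ≤ picardIterate L A B n t := by
    intro n
    induction n with
    | zero => simpa [picardIterate] using hB
    | succ n ih =>
      intro t ht a
      rw [← add_integral_picardIterate]
      exact hu _ (continuous_picardIterate L A B n) ih t ht a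
  exact fun t ht a =>
    le_mul_exp_of_forall_le_picardIterate hA (mul_nonneg hL ht.1) fun n => hiter n t ht a

theorem abs_collision_le {C k₁ k₂ k₃ k₄ a b c : ℝ} (h₁ : k₁ ∈ Icc 0 C) (h₂ : k₂ ∈ Icc 0 C)
    (h₃ : k₃ ∈ Icc 0 C) (h₄ : k₄ ∈ Icc 0 C) :
    |k₁ * a + k₂ * b - (k₃ + k₄) * c| ≤ C * (|a| + |b|) + 2 * C * |c| := by
  have hmul : ∀ {k M x : ℝ}, k ∈ Icc 0 M → |k * x| ≤ M * |x| := fun hk => by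
    rw [abs_mul, abs_of_nonneg hk.1]
    exact mul_le_mul_of_nonneg_right hk.2 (abs_nonneg _)
  have h₃₄ : k₃ + k₄ ∈ Icc 0 (2 * C) := ⟨by linarith [h₃.1, h₄.1], by linarith [h₃.2, h₄.2]⟩
  calc |k₁ * a + k₂ * b - (k₃ + k₄) * c| ≤ |k₁ * a| + |k₂ * b| + |(k₃ + k₄) * c| :=
        (abs_sub _ _).trans (add_le_add_left (abs_add_le _ _) _)
    _ ≤ C * (|a| + |b|) + 2 * C * |c| := by
        linarith [hmul (x := a) h₁, hmul (x := b) h₂, hmul (x := c) h₃₄]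

section Forward

variable {T CK Cφ : ℝ} {K : ℝ → ℝ → ℝ → ℝ} {φ : ℝ → ℝ → ℝ} {f : ℝ → ℝ → ℝ → ℝ}

theorem IsMildF.abs_le_add_integral (hK : ∀ x v v', K x v v' ∈ Icc 0 CK)
    (hφ : ∀ x v, |φ x v| ≤ Cφ) (hf : IsMildF T K φ (fun _ _ _ => 0) f) {w : ℝ → ℝ}
    (hw : Continuous w) (hfw : ∀ s ∈ Icc 0 T, ∀ x, ∀ v ∈ ({1, -1} : Set ℝ), |f s x v| ≤ w s) :
    ∀ t ∈ Icc 0 T, ∀ x, ∀ v ∈ ({1, -1} : Set ℝ),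
      |f t x v| ≤ Cφ + ∫ s in (0 : ℝ)..t, 4 * CK * w s := by
  obtain ⟨-, -, hmild⟩ := hf
  intro t ht x v hv
  have hCK : 0 ≤ CK := (hK 0 0 0).1.trans (hK 0 0 0).2
  have hcoll : ∀ s ∈ Ioc 0 t, ∀ y, |K y v 1 * f s y 1 + K y v (-1) * f s y (-1)
      - (K y 1 v + K y (-1) v) * f s y v + 0| ≤ 4 * CK * w s := fun s hs y => by
    have hs' : s ∈ Icc 0 T := ⟨hs.1.le, hs.2.trans ht.2⟩
    rw [add_zero]
    refine (abs_collision_le (hK _ _ _) (hK _ _ _) (hK _ _ _) (hK _ _ _)).trans ?_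
    nlinarith [hfw s hs' y 1 (by simp), hfw s hs' y (-1) (by simp), hfw s hs' y v hv]
  rw [hmild t ht x v hv]
  refine (abs_add_le _ _).trans (add_le_add (hφ _ _) ?_)
  rw [← Real.norm_eq_abs]
  exact intervalIntegral.norm_integral_le_of_norm_le ht.1
    (Eventually.of_forall fun s hs => hcoll s hs _)
    (by apply Continuous.intervalIntegrable; fun_prop)

theorem IsMildF.abs_le_mul_exp (hK : ∀ x v v', K x v v' ∈ Icc 0 CK)
    (hφ : ∀ x v, |φ x v| ≤ Cφ) (hf : IsMildF T K φ (fun _ _ _ => 0) f) :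
    ∀ t ∈ Icc 0 T, ∀ x, ∀ v ∈ ({1, -1} : Set ℝ), |f t x v| ≤ Cφ * exp (4 * CK * t) := by
  obtain ⟨B, hB⟩ := hf.2.1
  have hgron := le_mul_exp_of_le_add_integral (B := B)
    (u := fun t (p : ℝ × ({1, -1} : Set ℝ)) => |f t p.1 p.2|)
    (by linarith [(hK 0 0 0).1, (hK 0 0 0).2]) ((abs_nonneg _).trans (hφ 0 0))
    (fun t _ p => hB t p.1 p.2) fun w hw hfw t ht p =>
      hf.abs_le_add_integral hK hφ hw (fun s hs x v hv => hfw s hs (x, ⟨v, hv⟩)) t ht p.1 p.2 p.2.2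
  exact fun t ht x v hv => hgron t ht (x, ⟨v, hv⟩)

end Forward

section Backward

variable {T CK Cμ : ℝ} {K : ℝ → ℝ → ℝ → ℝ} {μ : ℝ → ℝ} {g : ℝ → ℝ → ℝ → ℝ}

theorem IsMildG.enorm_le (hK : ∀ x v v', K x v v' ∈ Icc 0 CK)
    (hg : IsMildG T K 1 (fun x _ => μ x) (fun _ _ _ => 0) g) {t : ℝ} (ht : t ∈ Icc 0 T) {v : ℝ}
    (hv : v ∈ ({1, -1} : Set ℝ)) (x : ℝ) :
    ‖g t x v‖ₑ ≤ ‖μ (x + v * (T - t))‖ₑ + ∫⁻ s in Ioc t T, ENNReal.ofReal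
      (CK * (|g s (x + v * (s - t)) 1| + |g s (x + v * (s - t)) (-1)|)
        + 2 * CK * |g s (x + v * (s - t)) v|) := by
  rw [hg.2.2.2 t ht x v hv, intervalIntegral.integral_of_le ht.2]
  refine (enorm_add_le _ _).trans (add_le_add_right ((enorm_integral_le_lintegral_enorm _).trans
    (lintegral_mono fun s => ?_)) _)
  rw [Real.enorm_eq_ofReal_abs]
  exact ENNReal.ofReal_le_ofReal <| by
    simpa only [one_mul, add_zero] using
      abs_collision_le (hK _ _ _) (hK _ _ _) (hK _ _ _) (hK _ _ _)

theorem IsMildG.lintegral_enorm_le (hK : ∀ x v v', K x v v' ∈ Icc 0 CK)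
    (hg : IsMildG T K 1 (fun x _ => μ x) (fun _ _ _ => 0) g) {t : ℝ} (ht : t ∈ Icc 0 T) {v : ℝ}
    (hv : v ∈ ({1, -1} : Set ℝ)) :
    ∫⁻ x, ‖g t x v‖ₑ ≤ (∫⁻ x, ‖μ x‖ₑ) + ∫⁻ s in Ioc t T, ENNReal.ofReal
      (CK * ((∫ x, |g s x 1|) + ∫ x, |g s x (-1)|) + 2 * CK * ∫ x, |g s x v|) := by
  have hCK : 0 ≤ CK := (hK 0 0 0).1.trans (hK 0 0 0).2
  set G : ℝ → ℝ → ℝ := fun s x =>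
    CK * (|g s (x + v * (s - t)) 1| + |g s (x + v * (s - t)) (-1)|)
      + 2 * CK * |g s (x + v * (s - t)) v|
  have hGm : Measurable fun p : ℝ × ℝ => ENNReal.ofReal (G p.2 p.1) := by
    have hgm : ∀ v', Measurable fun p : ℝ × ℝ => g p.2 (p.1 + v * (p.2 - t)) v' := fun v' =>
      hg.1.comp (f := fun p : ℝ × ℝ => (p.2, p.1 + v * (p.2 - t), v')) (by fun_prop)
    exact ((((hgm 1).abs.add (hgm (-1)).abs).const_mul _).add
      ((hgm v).abs.const_mul _)).ennreal_ofReal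
  have hGs : ∀ s ∈ Ioc t T, ∫⁻ x, ENNReal.ofReal (G s x) = ENNReal.ofReal
      (CK * ((∫ x, |g s x 1|) + ∫ x, |g s x (-1)|) + 2 * CK * ∫ x, |g s x v|) := by
    intro s hs
    have hint : ∀ v' ∈ ({1, -1} : Set ℝ), Integrable fun x => |g s (x + v * (s - t)) v'| :=
      fun v' hv' => ((hg.2.1 s ⟨ht.1.trans hs.1.le, hs.2⟩ v' hv').comp_add_right _).abs
    have hint₁₂ : Integrable fun x =>
        CK * (|g s (x + v * (s - t)) 1| + |g s (x + v * (s - t)) (-1)|) :=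
      ((hint 1 (by simp)).add (hint (-1) (by simp))).const_mul CK
    have hGint : Integrable (G s) := hint₁₂.add ((hint v hv).const_mul _)
    rw [← ofReal_integral_eq_lintegral_ofReal hGint (Eventually.of_forall fun x => by positivity)]
    simp only [G]
    rw [integral_add hint₁₂ ((hint v hv).const_mul _), integral_const_mul, integral_const_mul,
      integral_add (hint 1 (by simp)) (hint (-1) (by simp))]
    rw [integral_add_right_eq_self (fun x => |g s x 1|),
      integral_add_right_eq_self (fun x => |g s x (-1)|),
      integral_add_right_eq_self (fun x => |g s x v|)]
  calc ∫⁻ x, ‖g t x v‖ₑ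
      ≤ ∫⁻ x, ‖μ (x + v * (T - t))‖ₑ + ∫⁻ s in Ioc t T, ENNReal.ofReal (G s x) :=
        lintegral_mono (hg.enorm_le hK ht hv)
    _ = (∫⁻ x, ‖μ x‖ₑ) + ∫⁻ s in Ioc t T, ∫⁻ x, ENNReal.ofReal (G s x) := by
        rw [lintegral_add_right' _ hGm.lintegral_prod_right'.aemeasurable,
          lintegral_add_right_eq_self (fun x => ‖μ x‖ₑ),
          lintegral_lintegral_swap (f := fun x s => ENNReal.ofReal (G s x)) hGm.aemeasurable]
    _ = _ := by rw [setLIntegral_congr_fun measurableSet_Ioc hGs]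

theorem IsMildG.integral_abs_le_add_integral (hK : ∀ x v v', K x v v' ∈ Icc 0 CK)
    (hμ_int : Integrable μ) (hμ : ∫ x, |μ x| ≤ Cμ)
    (hg : IsMildG T K 1 (fun x _ => μ x) (fun _ _ _ => 0) g) {w : ℝ → ℝ} (hw : Continuous w)
    (hgw : ∀ s ∈ Icc 0 T, ∀ v ∈ ({1, -1} : Set ℝ), ∫ x, |g s x v| ≤ w s) :
    ∀ t ∈ Icc 0 T, ∀ v ∈ ({1, -1} : Set ℝ),
      ∫ x, |g t x v| ≤ Cμ + ∫ s in t..T, 4 * CK * w s := by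
  intro t ht v hv
  have hCK : 0 ≤ CK := (hK 0 0 0).1.trans (hK 0 0 0).2
  have hCμ : 0 ≤ Cμ := (integral_nonneg fun x => abs_nonneg _).trans hμ
  have hsub : Ioc t T ⊆ Icc 0 T := fun s hs => ⟨ht.1.trans hs.1.le, hs.2⟩
  have hw₀ : ∀ s ∈ Icc 0 T, 0 ≤ 4 * CK * w s := fun s hs => mul_nonneg (by positivity)
    ((integral_nonneg fun x => abs_nonneg _).trans (hgw s hs 1 (by simp)))
  have hwint : 0 ≤ ∫ s in t..T, 4 * CK * w s :=
    intervalIntegral.integral_nonneg ht.2 fun s hs => hw₀ s ⟨ht.1.trans hs.1, hs.2⟩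
  have hlin : ∫⁻ x, ‖g t x v‖ₑ ≤ ENNReal.ofReal (Cμ + ∫ s in t..T, 4 * CK * w s) :=
    calc ∫⁻ x, ‖g t x v‖ₑ
        ≤ (∫⁻ x, ‖μ x‖ₑ) + ∫⁻ s in Ioc t T, ENNReal.ofReal
          (CK * ((∫ x, |g s x 1|) + ∫ x, |g s x (-1)|) + 2 * CK * ∫ x, |g s x v|) :=
          hg.lintegral_enorm_le hK ht hv
      _ ≤ ENNReal.ofReal Cμ + ∫⁻ s in Ioc t T, ENNReal.ofReal (4 * CK * w s) := by
          rw [← ofReal_integral_norm_eq_lintegral_enorm hμ_int]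
          refine add_le_add (ENNReal.ofReal_le_ofReal hμ)
            (setLIntegral_mono' measurableSet_Ioc fun s hs => ENNReal.ofReal_le_ofReal ?_)
          have hs' := hsub hs
          nlinarith [hgw s hs' 1 (by simp), hgw s hs' (-1) (by simp), hgw s hs' v hv]
      _ = ENNReal.ofReal (Cμ + ∫ s in t..T, 4 * CK * w s) := by
          rw [ENNReal.ofReal_add hCμ hwint, intervalIntegral.integral_of_le ht.2,
            ofReal_integral_eq_lintegral_ofReal (by fun_prop : Continuous fun s =>
              4 * CK * w s).integrableOn_Ioc]
          filter_upwards [ae_restrict_mem measurableSet_Ioc] with s hs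
          exact hw₀ s (hsub hs)
  rwa [← ofReal_integral_norm_eq_lintegral_enorm (hg.2.1 t ht v hv),
    ENNReal.ofReal_le_ofReal_iff (by positivity)] at hlin

theorem IsMildG.integral_abs_le_mul_exp (hK : ∀ x v v', K x v v' ∈ Icc 0 CK)
    (hμ_int : Integrable μ) (hμ : ∫ x, |μ x| ≤ Cμ)
    (hg : IsMildG T K 1 (fun x _ => μ x) (fun _ _ _ => 0) g) :
    ∀ t ∈ Icc 0 T, ∀ v ∈ ({1, -1} : Set ℝ),
      ∫ x, |g t x v| ≤ Cμ * exp (4 * CK * (T - t)) := by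
  obtain ⟨B, hB⟩ := hg.2.2.1
  have hrefl : ∀ t ∈ Icc 0 T, T - t ∈ Icc 0 T := fun t ht =>
    ⟨sub_nonneg.2 ht.2, sub_le_self _ ht.1⟩
  have hgron := le_mul_exp_of_le_add_integral (L := 4 * CK) (B := B)
    (u := fun τ (v : ({1, -1} : Set ℝ)) => ∫ x, |g (T - τ) x v|)
    (by linarith [(hK 0 0 0).1, (hK 0 0 0).2]) ((integral_nonneg fun x => abs_nonneg _).trans hμ)
    (fun τ hτ v => hB (T - τ) (hrefl τ hτ) v v.2) fun w hw hgw τ hτ v => by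
      have hstep := hg.integral_abs_le_add_integral hK hμ_int hμ (w := fun s => w (T - s))
        (by fun_prop) (fun s hs v hv => by simpa using hgw (T - s) (hrefl s hs) ⟨v, hv⟩)
        (T - τ) (hrefl τ hτ) v v.2
      rwa [intervalIntegral.integral_comp_sub_left (fun s => 4 * CK * w s), sub_self,
        sub_sub_cancel] at hstep
  intro t ht v hv
  simpa using hgron (T - t) (hrefl t ht) ⟨v, hv⟩

end Backward

theorem abs_setIntegral_mul_sub_le {α : Type*} [MeasurableSpace α] {ν : Measure α}
    {F G₁ G₂ : α → ℝ} {M : ℝ} (I : Set α) (hF : ∀ x, |F x| ≤ M) (hG₁ : Integrable G₁ ν)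
    (hG₂ : Integrable G₂ ν) :
    |∫ x in I, F x * (G₁ x - G₂ x) ∂ν| ≤ M * (∫ x, |G₁ x| ∂ν + ∫ x, |G₂ x| ∂ν) := by
  have hmaj : Integrable (fun x => M * (|G₁ x| + |G₂ x|)) ν := (hG₁.abs.add hG₂.abs).const_mul M
  have hpt : ∀ x, |F x * (G₁ x - G₂ x)| ≤ M * (|G₁ x| + |G₂ x|) := fun x => by
    rw [abs_mul]
    exact mul_le_mul (hF x) (abs_sub _ _) (abs_nonneg _) ((abs_nonneg _).trans (hF x))
  calc |∫ x in I, F x * (G₁ x - G₂ x) ∂ν| ≤ ∫ x in I, M * (|G₁ x| + |G₂ x|) ∂ν := by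
        rw [← Real.norm_eq_abs]
        exact norm_integral_le_of_norm_le hmaj.integrableOn (Eventually.of_forall hpt)
    _ ≤ ∫ x, M * (|G₁ x| + |G₂ x|) ∂ν :=
        setIntegral_le_integral hmaj (Eventually.of_forall fun x => (abs_nonneg _).trans (hpt x))
    _ = M * (∫ x, |G₁ x| ∂ν + ∫ x, |G₂ x| ∂ν) := by
        rw [integral_const_mul, integral_add hG₁.abs hG₂.abs]

theorem gradient_entry_bound_general
    (T CK Cφ Cμ : ℝ) (hT : 0 < T)
    (K : ℝ → ℝ → ℝ → ℝ)
    (hK_nonneg : ∀ x v v', 0 ≤ K x v v') (hK_bdd : ∀ x v v', K x v v' ≤ CK)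
    (φ : ℝ → ℝ → ℝ) (hφ_bds : ∀ x v, 0 ≤ φ x v ∧ φ x v ≤ Cφ)
    (μ : ℝ → ℝ) (hμ_int : Integrable μ) (hμ : (∫ x : ℝ, |μ x|) ≤ Cμ)
    (f g : ℝ → ℝ → ℝ → ℝ)
    (hf : IsMildF T K φ (fun _ _ _ => 0) f)
    (hg : IsMildG T K 1 (fun x _ => μ x) (fun _ _ _ => 0) g) :
    ∀ I : Set ℝ, MeasurableSet I →
      ∀ v ∈ ({1, -1} : Set ℝ), ∀ v' ∈ ({1, -1} : Set ℝ),
        |∫ t in (0 : ℝ)..T, ∫ x in I, f t x v' * (g t x v' - g t x v)|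
          ≤ 2 * Cφ * Cμ * T * Real.exp (4 * CK * T) := by
  intro I _ v hv v' hv'
  have hK : ∀ x v v', K x v v' ∈ Icc 0 CK := fun x v v' => ⟨hK_nonneg x v v', hK_bdd x v v'⟩
  have hCφ : 0 ≤ Cφ := (hφ_bds 0 0).1.trans (hφ_bds 0 0).2
  have hf_le := hf.abs_le_mul_exp hK fun x v =>
    (abs_of_nonneg (hφ_bds x v).1).trans_le (hφ_bds x v).2
  have hg_le := hg.integral_abs_le_mul_exp hK hμ_int hμ
  have hslice : ∀ t ∈ uIoc 0 T,
      ‖∫ x in I, f t x v' * (g t x v' - g t x v)‖ ≤ 2 * Cφ * Cμ * exp (4 * CK * T) := by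
    intro t ht
    have ht' : t ∈ Icc 0 T := Ioc_subset_Icc_self (by rwa [uIoc_of_le hT.le] at ht)
    refine (abs_setIntegral_mul_sub_le I (fun x => hf_le t ht' x v' hv') (hg.2.1 t ht' v' hv')
      (hg.2.1 t ht' v hv)).trans ?_
    calc _ ≤ Cφ * exp (4 * CK * t)
          * (Cμ * exp (4 * CK * (T - t)) + Cμ * exp (4 * CK * (T - t))) := by
          gcongr
          exacts [hg_le t ht' v' hv', hg_le t ht' v hv]
      _ = 2 * Cφ * Cμ * exp (4 * CK * T) := by
          rw [show 4 * CK * T = 4 * CK * t + 4 * CK * (T - t) by ring, exp_add]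
          ring
  calc |∫ t in (0 : ℝ)..T, ∫ x in I, f t x v' * (g t x v' - g t x v)|
      ≤ 2 * Cφ * Cμ * exp (4 * CK * T) * |T - 0| :=
        intervalIntegral.norm_integral_le_of_norm_le_const hslice
    _ = 2 * Cφ * Cμ * T * exp (4 * CK * T) := by rw [sub_zero, abs_of_pos hT]; ring

/-- uniform bound on the adjoint representation of the measurement-gradient
entries: `|∫₀ᵀ ∫_I f(t,x,v')(g(t,x,v') − g(t,x,v)) dx dt| ≤ 2 C_φ C_μ T e^{4 C_K T}`
for the forward solution `f` and the adjoint solution `g` with final datum `μ`. -/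
theorem gradient_entry_bound
    (T CK Cφ Cμ : ℝ) (hT : 0 < T) (hCK : 0 < CK) (hCφ : 0 ≤ Cφ) (hCμ : 0 ≤ Cμ)
    (K : ℝ → ℝ → ℝ → ℝ)
    (hK_nonneg : ∀ x v v', 0 ≤ K x v v') (hK_bdd : ∀ x v v', K x v v' ≤ CK)
    (φ : ℝ → ℝ → ℝ) (hφ_bds : ∀ x v, 0 ≤ φ x v ∧ φ x v ≤ Cφ)
    (μ : ℝ → ℝ) (hμ_int : Integrable μ) (hμ : (∫ x : ℝ, |μ x|) ≤ Cμ)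
    (f g : ℝ → ℝ → ℝ → ℝ)
    (hf : IsMildF T K φ (fun _ _ _ => 0) f)
    (hg : IsMildG T K 1 (fun x _ => μ x) (fun _ _ _ => 0) g) :
    ∀ I : Set ℝ, MeasurableSet I →
      ∀ v ∈ ({1, -1} : Set ℝ), ∀ v' ∈ ({1, -1} : Set ℝ),
        |∫ t in (0 : ℝ)..T, ∫ x in I, f t x v' * (g t x v' - g t x v)|
          ≤ 2 * Cφ * Cμ * T * Real.exp (4 * CK * T) :=
  gradient_entry_bound_general T CK Cφ Cμ hT K hK_nonneg hK_bdd φ hφ_bds μ hμ_int hμ f g hf hg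
end
end

section
/- Let K be measurable with 0 ≤ K ≤ C_K, σ(x,v) = Σ_{v'∈V} K(x,v',v) and L̃(g)(t,x,v) = Σ_{v'∈V} K(x,v',v) g(t,x,v'). Suppose g_{prev} : [0,T] × ℝ × V → ℝ is measurable with S := ess sup_{t,v} ‖g_{prev}(t,·,v)‖_{L¹(ℝ)} < ∞, and let g be a mild solution of −∂_t g − v ∂_x g = −σ g + L̃(g_{prev}) with final datum 0. Then for all t ∈ [0,T]: max_v ‖g(t,·,v)‖_{L¹(ℝ)} ≤ (e^{2 C_K (T−t)} − 1) · S ≤ (e^{2 C_K T} − 1) · S. (This is the one-step contraction of the singular decomposition: each iterate g_n of the decomposition of the adjoint solution gains a factor e^{2C_KT} − 1 in L¹.) -/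
open MeasureTheory Real Set Filter

noncomputable section

/-!
Along each characteristic the mild formula bounds `|g(t,x,v)|` by the time integral of
`C_K (2|g| + |g_prev(·,1)| + |g_prev(·,-1)|)` at `(s, x + v(s-t))`. Integrating in `x`, Tonelli and
the translation invariance of Lebesgue measure give `u(t) ≤ ∫_t^T 2 C_K (u(s) + S) ds` for
`u(t) = ‖g(t,·,v)‖_{L¹}`, and a backward Gronwall argument turns this into
`u(t) ≤ (e^{2 C_K (T-t)} - 1) S`.
-/

open Function Topology
open scoped Nat ENNReal

/-- One step of the backward Picard iteration for `u(t) ≤ ∫_t^T b (u(s) + S) ds`. -/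
theorem integral_mul_exp_add_pow_div_factorial (b S M t T : ℝ) (n : ℕ) :
    ∫ s in t..T, b * ((exp (b * (T - s)) - 1) * S + M * (b * (T - s)) ^ n / n ! + S) =
      (exp (b * (T - t)) - 1) * S + M * (b * (T - t)) ^ (n + 1) / (n + 1)! := by
  have hderiv : ∀ s, HasDerivAt
      (fun s => -(exp (b * (T - s)) * S) - M * (b * (T - s)) ^ (n + 1) / (n + 1)!)
      (b * ((exp (b * (T - s)) - 1) * S + M * (b * (T - s)) ^ n / n ! + S)) s := by
    intro s
    have hlin : HasDerivAt (fun s => b * (T - s)) (-b) s := by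
      simpa using ((hasDerivAt_id s).const_sub T).const_mul b
    refine (((hlin.exp.mul_const S).neg).sub
      (((hlin.pow (n + 1)).const_mul M).div_const _)).congr_deriv ?_
    rw [Nat.factorial_succ]
    push_cast
    field_simp
    ring
  rw [intervalIntegral.integral_eq_sub_of_hasDerivAt (fun s _ => hderiv s)
    (Continuous.intervalIntegrable (by fun_prop) _ _)]
  simp
  ring

theorem le_exp_sub_one_mul_of_le_intervalIntegral {u : ℝ → ℝ} {a T b S M : ℝ}
    (hb : 0 ≤ b) (hS : 0 ≤ S) (hu : IntegrableOn u (Icc a T)) (hM : ∀ s ∈ Icc a T, u s ≤ M)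
    (h : ∀ t ∈ Icc a T, u t ≤ ∫ s in t..T, b * (u s + S)) :
    ∀ t ∈ Icc a T, u t ≤ (exp (b * (T - t)) - 1) * S := by
  have hiter : ∀ n : ℕ, ∀ t ∈ Icc a T,
      u t ≤ (exp (b * (T - t)) - 1) * S + M * (b * (T - t)) ^ n / n ! := by
    intro n
    induction n with
    | zero =>
      intro t ht
      have : 0 ≤ (exp (b * (T - t)) - 1) * S :=
        mul_nonneg (sub_nonneg.2 (one_le_exp (mul_nonneg hb (sub_nonneg.2 ht.2)))) hS
      simpa using (hM t ht).trans (le_add_of_nonneg_left this)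
    | succ n ih =>
      intro t ht
      rw [← integral_mul_exp_add_pow_div_factorial]
      refine (h t ht).trans (intervalIntegral.integral_mono_on ht.2 ?_
        (Continuous.intervalIntegrable (by fun_prop) _ _) fun s hs => ?_)
      · have hsub : uIcc t T ⊆ Icc a T := by
          rw [uIcc_of_le ht.2]
          exact Icc_subset_Icc_left ht.1
        exact ((hu.mono_set hsub).intervalIntegrable.add intervalIntegrable_const).const_mul b
      · gcongr
        exact ih s ⟨ht.1.trans hs.1, hs.2⟩
  intro t ht
  have hlim : Tendsto (fun n : ℕ => (exp (b * (T - t)) - 1) * S + M * (b * (T - t)) ^ n / n !)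
      atTop (𝓝 ((exp (b * (T - t)) - 1) * S)) := by
    simpa [mul_div_assoc] using
      ((FloorSemiring.tendsto_pow_div_factorial_atTop (b * (T - t))).const_mul M).const_add
        ((exp (b * (T - t)) - 1) * S)
  exact ge_of_tendsto' hlim fun n => hiter n t ht

theorem lintegral_lintegral_comp_add_eq {α G : Type*} [MeasurableSpace α] [MeasurableSpace G]
    [AddGroup G] [MeasurableAdd₂ G] {μ : Measure α} [SFinite μ] {ν : Measure G} [SFinite ν]
    [ν.IsAddRightInvariant] {F : α → G → ℝ≥0∞} (hF : Measurable (uncurry F)) {τ : α → G}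
    (hτ : Measurable τ) :
    ∫⁻ x, ∫⁻ s, F s (x + τ s) ∂μ ∂ν = ∫⁻ s, ∫⁻ y, F s y ∂ν ∂μ := by
  have hmeas : Measurable (uncurry fun x s => F s (x + τ s)) :=
    hF.comp (measurable_snd.prodMk (measurable_fst.add (hτ.comp measurable_snd)))
  rw [lintegral_lintegral_swap (μ := ν) hmeas.aemeasurable]
  exact lintegral_congr fun s => lintegral_add_right_eq_self (F s) (τ s)

theorem abs_add_sub_mul_le_of_mem_Icc {c k₁ k₂ a p₁ p₂ : ℝ} (hk₁ : k₁ ∈ Icc 0 c)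
    (hk₂ : k₂ ∈ Icc 0 c) :
    |k₁ * p₁ + k₂ * p₂ - (k₁ + k₂) * a| ≤ c * (2 * |a| + |p₁| + |p₂|) :=
  calc |k₁ * p₁ + k₂ * p₂ - (k₁ + k₂) * a|
      ≤ |k₁ * p₁| + |k₂ * p₂| + |(k₁ + k₂) * a| :=
        (abs_sub _ _).trans (add_le_add_left (abs_add_le _ _) _)
    _ = k₁ * |p₁| + k₂ * |p₂| + (k₁ + k₂) * |a| := by
        rw [abs_mul, abs_mul, abs_mul, abs_of_nonneg hk₁.1, abs_of_nonneg hk₂.1,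
          abs_of_nonneg (add_nonneg hk₁.1 hk₂.1)]
    _ ≤ c * |p₁| + c * |p₂| + (c + c) * |a| := by gcongr <;> simp_all
    _ = c * (2 * |a| + |p₁| + |p₂|) := by ring

theorem IsMildG.integrableOn_integral_abs {T : ℝ} {K : ℝ → ℝ → ℝ → ℝ} {α : ℝ}
    {ψ : ℝ → ℝ → ℝ} {h g : ℝ → ℝ → ℝ → ℝ} (hg : IsMildG T K α ψ h g) (v : ℝ)
    (hv : v ∈ ({1, -1} : Set ℝ)) :
    IntegrableOn (fun s => ∫ x, |g s x v|) (Icc 0 T) := by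
  obtain ⟨hg_meas, -, ⟨C, hC⟩, -⟩ := hg
  have hgv : Measurable fun p : ℝ × ℝ => |g p.1 p.2 v| :=
    (hg_meas.comp (measurable_fst.prodMk (measurable_snd.prodMk measurable_const))).abs
  refine Measure.integrableOn_of_bounded (M := C) measure_Icc_lt_top.ne
    hgv.stronglyMeasurable.integral_prod_right'.aestronglyMeasurable ?_
  filter_upwards [ae_restrict_mem measurableSet_Icc] with s hs
  rw [Real.norm_of_nonneg (integral_nonneg fun _ => abs_nonneg _)]
  exact hC s hs v hv

def mildMajorant (CK : ℝ) (gprev g : ℝ → ℝ → ℝ → ℝ) (v s y : ℝ) : ℝ :=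
  CK * (2 * |g s y v| + |gprev s y 1| + |gprev s y (-1)|)

section

variable {T CK : ℝ} {K : ℝ → ℝ → ℝ → ℝ} {gprev g : ℝ → ℝ → ℝ → ℝ}

theorem enorm_le_setLIntegral_mildMajorant (hK_nonneg : ∀ x v v', 0 ≤ K x v v')
    (hK_bdd : ∀ x v v', K x v v' ≤ CK)
    (hg : IsMildG T K 0 (fun _ _ => 0)
      (fun s x v => K x 1 v * gprev s x 1 + K x (-1) v * gprev s x (-1)) g)
    {t : ℝ} (ht : t ∈ Icc 0 T) (x : ℝ) {v : ℝ} (hv : v ∈ ({1, -1} : Set ℝ)) :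
    ‖g t x v‖ₑ ≤
      ∫⁻ s in Ioc t T, ENNReal.ofReal (mildMajorant CK gprev g v s (x + v * (s - t))) := by
  rw [hg.2.2.2 t ht x v hv, intervalIntegral.integral_of_le ht.2, zero_add]
  refine (enorm_integral_le_lintegral_enorm _).trans (lintegral_mono fun s => ?_)
  set y := x + v * (s - t)
  rw [Real.enorm_eq_ofReal_abs]
  refine ENNReal.ofReal_le_ofReal (le_of_eq_of_le ?_ (abs_add_sub_mul_le_of_mem_Icc
    ⟨hK_nonneg y 1 v, hK_bdd y 1 v⟩ ⟨hK_nonneg y (-1) v, hK_bdd y (-1) v⟩))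
  ring_nf

theorem integrable_mildMajorant {s v : ℝ} (hg : Integrable fun y => g s y v)
    (hp₁ : Integrable fun y => gprev s y 1) (hp₂ : Integrable fun y => gprev s y (-1)) :
    Integrable (mildMajorant CK gprev g v s) :=
  ((hg.abs.const_mul 2).add hp₁.abs |>.add hp₂.abs).const_mul CK

theorem integral_mildMajorant_le (hCK : 0 ≤ CK) {S s v : ℝ} (hg : Integrable fun y => g s y v)
    (hp₁ : Integrable fun y => gprev s y 1) (hp₂ : Integrable fun y => gprev s y (-1))
    (hS₁ : ∫ y, |gprev s y 1| ≤ S) (hS₂ : ∫ y, |gprev s y (-1)| ≤ S) :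
    ∫ y, mildMajorant CK gprev g v s y ≤ 2 * CK * ((∫ y, |g s y v|) + S) := by
  have h₁ : Integrable fun y => 2 * |g s y v| := hg.abs.const_mul 2
  have h₁₂ : Integrable fun y => 2 * |g s y v| + |gprev s y 1| := h₁.add hp₁.abs
  unfold mildMajorant
  rw [integral_const_mul, integral_add h₁₂ hp₂.abs, integral_add h₁ hp₁.abs, integral_const_mul]
  nlinarith

theorem integral_abs_le_intervalIntegral_of_isMildG (hK_nonneg : ∀ x v v', 0 ≤ K x v v')
    (hK_bdd : ∀ x v v', K x v v' ≤ CK) {S : ℝ}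
    (hgprev_meas : Measurable fun p : ℝ × ℝ × ℝ => gprev p.1 p.2.1 p.2.2)
    (hgprev_int : ∀ t ∈ Icc (0 : ℝ) T, ∀ v ∈ ({1, -1} : Set ℝ),
      Integrable (fun x => gprev t x v))
    (hgprev_L1 : ∀ t ∈ Icc (0 : ℝ) T, ∀ v ∈ ({1, -1} : Set ℝ), (∫ x, |gprev t x v|) ≤ S)
    (hg : IsMildG T K 0 (fun _ _ => 0)
      (fun s x v => K x 1 v * gprev s x 1 + K x (-1) v * gprev s x (-1)) g)
    {t : ℝ} (ht : t ∈ Icc 0 T) {v : ℝ} (hv : v ∈ ({1, -1} : Set ℝ)) :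
    ∫ x, |g t x v| ≤ ∫ s in t..T, 2 * CK * ((∫ y, |g s y v|) + S) := by
  have hCK : 0 ≤ CK := (hK_nonneg 0 0 0).trans (hK_bdd 0 0 0)
  have hS : 0 ≤ S := (integral_nonneg fun _ => abs_nonneg _).trans (hgprev_L1 t ht v hv)
  have hsub : Ioc t T ⊆ Icc 0 T := Ioc_subset_Icc_self.trans (Icc_subset_Icc_left ht.1)
  have hmeas : Measurable (uncurry (mildMajorant CK gprev g v)) := by
    have hsec : ∀ {f : ℝ → ℝ → ℝ → ℝ}, Measurable (fun p : ℝ × ℝ × ℝ => f p.1 p.2.1 p.2.2) →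
        ∀ w, Measurable fun p : ℝ × ℝ => |f p.1 p.2 w| := fun hf w =>
      (hf.comp (measurable_fst.prodMk (measurable_snd.prodMk measurable_const))).abs
    exact measurable_const.mul
      (((hsec hg.1 v).const_mul 2).add (hsec hgprev_meas 1) |>.add (hsec hgprev_meas (-1)))
  have hrhs_int : IntegrableOn (fun s => 2 * CK * ((∫ y, |g s y v|) + S)) (Ioc t T) :=
    ((hg.integrableOn_integral_abs v hv).mono_set hsub |>.add
      (integrableOn_const measure_Ioc_lt_top.ne)).const_mul _
  rw [intervalIntegral.integral_of_le ht.2, ← ENNReal.ofReal_le_ofReal_iff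
    (setIntegral_nonneg measurableSet_Ioc fun s _ => by positivity)]
  calc ENNReal.ofReal (∫ x, |g t x v|) = ∫⁻ x, ‖g t x v‖ₑ :=
        ofReal_integral_norm_eq_lintegral_enorm (hg.2.1 t ht v hv)
    _ ≤ ∫⁻ x, ∫⁻ s in Ioc t T, ENNReal.ofReal (mildMajorant CK gprev g v s (x + v * (s - t))) :=
        lintegral_mono fun x => enorm_le_setLIntegral_mildMajorant hK_nonneg hK_bdd hg ht x hv
    _ = ∫⁻ s in Ioc t T, ∫⁻ y, ENNReal.ofReal (mildMajorant CK gprev g v s y) :=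
        lintegral_lintegral_comp_add_eq
          (F := fun s y => ENNReal.ofReal (mildMajorant CK gprev g v s y))
          (ENNReal.measurable_ofReal.comp hmeas)
          ((measurable_id.sub_const t).const_mul v)
    _ ≤ ∫⁻ s in Ioc t T, ENNReal.ofReal (2 * CK * ((∫ y, |g s y v|) + S)) := by
        refine setLIntegral_mono' measurableSet_Ioc fun s hs => ?_
        have hg_s := hg.2.1 s (hsub hs) v hv
        have hp₁ := hgprev_int s (hsub hs) 1 (by simp)
        have hp₂ := hgprev_int s (hsub hs) (-1) (by simp)
        rw [← ofReal_integral_eq_lintegral_ofReal (integrable_mildMajorant hg_s hp₁ hp₂)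
          (ae_of_all _ fun y => by unfold mildMajorant; positivity)]
        exact ENNReal.ofReal_le_ofReal (integral_mildMajorant_le hCK hg_s hp₁ hp₂
          (hgprev_L1 s (hsub hs) 1 (by simp)) (hgprev_L1 s (hsub hs) (-1) (by simp)))
    _ = ENNReal.ofReal (∫ s in Ioc t T, 2 * CK * ((∫ y, |g s y v|) + S)) :=
        (ofReal_integral_eq_lintegral_ofReal hrhs_int
          (ae_of_all _ fun s => by positivity)).symm

end

theorem singular_decomposition_contraction_general
    (T CK S : ℝ)
    (K : ℝ → ℝ → ℝ → ℝ)
    (hK_nonneg : ∀ x v v', 0 ≤ K x v v') (hK_bdd : ∀ x v v', K x v v' ≤ CK)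
    (gprev : ℝ → ℝ → ℝ → ℝ)
    (hgprev_meas : Measurable fun p : ℝ × ℝ × ℝ => gprev p.1 p.2.1 p.2.2)
    (hgprev_int : ∀ t ∈ Set.Icc (0 : ℝ) T, ∀ v ∈ ({1, -1} : Set ℝ),
      Integrable (fun x => gprev t x v))
    (hgprev_L1 : ∀ t ∈ Set.Icc (0 : ℝ) T, ∀ v ∈ ({1, -1} : Set ℝ),
      (∫ x : ℝ, |gprev t x v|) ≤ S)
    (g : ℝ → ℝ → ℝ → ℝ)
    (hg : IsMildG T K 0 (fun _ _ => 0)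
      (fun s x v => K x 1 v * gprev s x 1 + K x (-1) v * gprev s x (-1)) g) :
    ∀ t ∈ Set.Icc (0 : ℝ) T, ∀ v ∈ ({1, -1} : Set ℝ),
      (∫ x : ℝ, |g t x v|) ≤ (Real.exp (2 * CK * (T - t)) - 1) * S ∧
      (∫ x : ℝ, |g t x v|) ≤ (Real.exp (2 * CK * T) - 1) * S := by
  intro t ht v hv
  have hCK : 0 ≤ CK := (hK_nonneg 0 0 0).trans (hK_bdd 0 0 0)
  have hS : 0 ≤ S := (integral_nonneg fun _ => abs_nonneg _).trans (hgprev_L1 t ht v hv)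
  obtain ⟨C, hC⟩ := hg.2.2.1
  have hL1 : ∫ x, |g t x v| ≤ (exp (2 * CK * (T - t)) - 1) * S :=
    le_exp_sub_one_mul_of_le_intervalIntegral (by positivity) hS
      (hg.integrableOn_integral_abs v hv) (fun s hs => hC s hs v hv)
      (fun _ ht' => integral_abs_le_intervalIntegral_of_isMildG hK_nonneg hK_bdd hgprev_meas
        hgprev_int hgprev_L1 hg ht' hv) t ht
  refine ⟨hL1, hL1.trans ?_⟩
  gcongr
  exact sub_le_self T ht.1

/-- one-step contraction of the singular decomposition of the adjoint
solution: if `g` is a mild solution of `−∂ₜg − v ∂ₓg = −σ g + L̃(g_prev)` with zero final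
datum and `‖g_prev(t,·,v)‖_{L¹} ≤ S` uniformly, then
`max_v ‖g(t,·,v)‖_{L¹} ≤ (e^{2C_K(T−t)} − 1) S ≤ (e^{2C_K T} − 1) S`. -/
theorem singular_decomposition_contraction
    (T CK S : ℝ) (hT : 0 < T) (hCK : 0 < CK)
    (K : ℝ → ℝ → ℝ → ℝ)
    (hK_nonneg : ∀ x v v', 0 ≤ K x v v') (hK_bdd : ∀ x v v', K x v v' ≤ CK)
    (gprev : ℝ → ℝ → ℝ → ℝ)
    (hgprev_meas : Measurable fun p : ℝ × ℝ × ℝ => gprev p.1 p.2.1 p.2.2)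
    (hgprev_int : ∀ t ∈ Set.Icc (0 : ℝ) T, ∀ v ∈ ({1, -1} : Set ℝ),
      Integrable (fun x => gprev t x v))
    (hgprev_L1 : ∀ t ∈ Set.Icc (0 : ℝ) T, ∀ v ∈ ({1, -1} : Set ℝ),
      (∫ x : ℝ, |gprev t x v|) ≤ S)
    (g : ℝ → ℝ → ℝ → ℝ)
    (hg : IsMildG T K 0 (fun _ _ => 0)
      (fun s x v => K x 1 v * gprev s x 1 + K x (-1) v * gprev s x (-1)) g) :
    ∀ t ∈ Set.Icc (0 : ℝ) T, ∀ v ∈ ({1, -1} : Set ℝ),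
      (∫ x : ℝ, |g t x v|) ≤ (Real.exp (2 * CK * (T - t)) - 1) * S ∧
      (∫ x : ℝ, |g t x v|) ≤ (Real.exp (2 * CK * T) - 1) * S :=
  singular_decomposition_contraction_general T CK S K hK_nonneg hK_bdd gprev hgprev_meas hgprev_int
    hgprev_L1 g hg
end
end

section
/- Let K be measurable with 0 ≤ K ≤ C_K and let μ₁, μ₂ ∈ L¹(ℝ) with ‖μ₁‖_{L¹}, ‖μ₂‖_{L¹} ≤ C_μ. Define ḡ₀(t,x,v) = exp(−∫₀^{T−t} σ(x + vτ, v) dτ) · (μ₂ − μ₁)(x + v(T−t)); for n ≥ 1 let ḡ_n be a mild solution of −∂_t ḡ_n − v ∂_x ḡ_n = −σ ḡ_n + L̃(ḡ_{n−1}) with final datum 0; and let ḡ_{>N} be a mild solution of −∂_t ḡ_{>N} − v ∂_x ḡ_{>N} = −σ ḡ_{>N} + L̃(ḡ_N + ḡ_{>N}) with final datum 0. Let f be a bounded measurable mild solution of the homogeneous kinetic equation with initial datum φ, 0 ≤ φ ≤ C_φ. Then for every measurable set I ⊆ ℝ and all v, v' ∈ V: |∫₀^T ∫_I f(t,x,v')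 ḡ_{>N}(t,x,v) dx dt| ≤ 2 T² C_K C_φ e^{4 C_K T} (e^{2 C_K T} − 1)^N C_μ; in particular this bound becomes arbitrarily small for large N when e^{2 C_K T} − 1 < 1. -/
/-!
The forward solution is bounded pointwise by a Grönwall argument, `|f(t)| ≤ C_φ e^{4 C_K t}`.
The adjoint terms are bounded in `L¹ₓ` backward in time: free transport preserves `L¹ₓ` norms and
the collision terms cost at most `2 C_K` times them. Comparison with explicit supersolutions gives
`‖ḡ_n(t)‖₁ ≤ 2 C_μ (e^{2C_K T} − 1)ⁿ e^{2C_K (T−t)}` by induction on `n`, and then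
`‖ḡ_{>N}(t)‖₁ ≤ 2 C_μ (e^{2C_K T} − 1)^N (e^{4C_K(T−t)} − e^{2C_K(T−t)})`, which is the exact
solution of the comparison equation for the remainder. Finally `e^{2y} − e^y ≤ y e^{2y}` with
`y = 2 C_K (T − t)` turns the time integral of `C_φ e^{4C_K t} ‖ḡ_{>N}(t)‖₁` into the factor `T²`.
-/

open MeasureTheory Real Set Filter

noncomputable section

theorem abs_gain_sub_loss_le {C k₁ k₂ k₃ k₄ a b c : ℝ}
    (h₁ : 0 ≤ k₁) (h₂ : 0 ≤ k₂) (h₃ : 0 ≤ k₃) (h₄ : 0 ≤ k₄)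
    (h₁' : k₁ ≤ C) (h₂' : k₂ ≤ C) (h₃' : k₃ ≤ C) (h₄' : k₄ ≤ C) :
    |k₁ * a + k₂ * b - (k₃ + k₄) * c| ≤ C * (|a| + |b| + 2 * |c|) := by
  calc |k₁ * a + k₂ * b - (k₃ + k₄) * c|
      ≤ k₁ * |a| + k₂ * |b| + (k₃ + k₄) * |c| := by
        refine (abs_sub _ _).trans (add_le_add ((abs_add_le _ _).trans_eq ?_) ?_)
        · rw [abs_mul, abs_mul, abs_of_nonneg h₁, abs_of_nonneg h₂]
        · rw [abs_mul, abs_of_nonneg (add_nonneg h₃ h₄)]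
    _ ≤ C * |a| + C * |b| + (C + C) * |c| := by gcongr
    _ = C * (|a| + |b| + 2 * |c|) := by ring

theorem exp_two_mul_sub_exp_le (y : ℝ) : exp (2 * y) - exp y ≤ y * exp (2 * y) := by
  have hsplit : exp (-y) * exp (2 * y) = exp y := by rw [← exp_add]; ring_nf
  nlinarith [add_one_le_exp (-y), exp_pos (2 * y)]

theorem integral_mul_exp_mul (c t : ℝ) :
    ∫ s in (0 : ℝ)..t, c * exp (c * s) = exp (c * t) - 1 := by
  have hderiv : ∀ s ∈ uIcc 0 t, HasDerivAt (fun s => exp (c * s)) (c * exp (c * s)) s := by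
    intro s _
    simpa [mul_comm] using ((hasDerivAt_id s).const_mul c).exp
  rw [intervalIntegral.integral_eq_sub_of_hasDerivAt hderiv
    ((by fun_prop : Continuous fun s => c * exp (c * s)).intervalIntegrable _ _),
    mul_zero, exp_zero]

theorem integral_mul_exp_mul_sub (c t T : ℝ) :
    ∫ s in t..T, c * exp (c * (T - s)) = exp (c * (T - t)) - 1 := by
  rw [intervalIntegral.integral_comp_sub_left (fun s => c * exp (c * s)), sub_self,
    integral_mul_exp_mul]

theorem mul_integral_pow_div_factorial (β t : ℝ) (n : ℕ) :
    β * ∫ s in (0 : ℝ)..t, (β * s) ^ n / n.factorial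
      = (β * t) ^ (n + 1) / (n + 1).factorial := by
  rw [← intervalIntegral.integral_const_mul]
  have hderiv : ∀ s ∈ uIcc 0 t, HasDerivAt (fun s => (β * s) ^ (n + 1) / (n + 1).factorial)
      (β * ((β * s) ^ n / n.factorial)) s := by
    intro s _
    refine (((hasDerivAt_pow (n + 1) (β * s)).comp s
      ((hasDerivAt_id s).const_mul β)).div_const ((n + 1).factorial : ℝ)).congr_deriv ?_
    rw [Nat.factorial_succ, Nat.add_sub_cancel]
    push_cast
    field_simp
  rw [intervalIntegral.integral_eq_sub_of_hasDerivAt hderiv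
    ((by fun_prop : Continuous fun s => β * ((β * s) ^ n / n.factorial)).intervalIntegrable _ _)]
  simp

/-- The integral inequality is assumed only against continuous majorants `B` of the family `u`, so
that no measurability of `u` is needed. -/
theorem le_supersolution_of_le_add_integral {ι : Type*} {T β M : ℝ} {a w : ℝ → ℝ}
    {u : ι → ℝ → ℝ} (hw : Continuous w) (hM : ∀ i, ∀ t ∈ Icc 0 T, u i t ≤ M)
    (hu : ∀ B : ℝ → ℝ, Continuous B → ∀ t ∈ Icc 0 T,
      (∀ j, ∀ s ∈ Icc 0 t, u j s ≤ B s) → ∀ i, u i t ≤ a t + β * ∫ s in (0 : ℝ)..t, B s)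
    (hw_super : ∀ t ∈ Icc 0 T, a t + β * ∫ s in (0 : ℝ)..t, w s ≤ w t) :
    ∀ i, ∀ t ∈ Icc 0 T, u i t ≤ w t := by
  obtain ⟨m, hm⟩ := (isCompact_Icc (a := (0 : ℝ)) (b := T)).bddBelow_image hw.continuousOn
  have hiter : ∀ n : ℕ, ∀ i, ∀ t ∈ Icc 0 T,
      u i t ≤ w t + (M - m) * ((β * t) ^ n / n.factorial) := by
    intro n
    induction n with
    | zero =>
      intro i t ht
      have hmt := hm (mem_image_of_mem w ht)
      simp only [pow_zero, Nat.factorial_zero, Nat.cast_one, div_one, mul_one]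
      linarith [hM i t ht]
    | succ n ih =>
      intro i t ht
      have hB : Continuous fun s => (M - m) * ((β * s) ^ n / n.factorial) := by fun_prop
      refine (hu (fun s => w s + (M - m) * ((β * s) ^ n / n.factorial)) (hw.add hB) t ht
        (fun j s hs => ih j s ⟨hs.1, hs.2.trans ht.2⟩) i).trans ?_
      rw [intervalIntegral.integral_add (hw.intervalIntegrable _ _) (hB.intervalIntegrable _ _),
        intervalIntegral.integral_const_mul, mul_add, mul_left_comm,
        mul_integral_pow_div_factorial]
      linarith [hw_super t ht]
  intro i t ht
  have hlim := ((FloorSemiring.tendsto_pow_div_factorial_atTop (β * t)).const_mul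
    (M - m)).const_add (w t)
  rw [mul_zero, add_zero] at hlim
  exact ge_of_tendsto' hlim fun n => hiter n i t ht

theorem le_supersolution_of_le_add_integral_backward {ι : Type*} {T β M : ℝ} {a w : ℝ → ℝ}
    {u : ι → ℝ → ℝ} (hw : Continuous w) (hM : ∀ i, ∀ t ∈ Icc 0 T, u i t ≤ M)
    (hu : ∀ B : ℝ → ℝ, Continuous B → ∀ t ∈ Icc 0 T,
      (∀ j, ∀ s ∈ Icc t T, u j s ≤ B s) → ∀ i, u i t ≤ a t + β * ∫ s in t..T, B s)
    (hw_super : ∀ t ∈ Icc 0 T, a t + β * ∫ s in t..T, w s ≤ w t) :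
    ∀ i, ∀ t ∈ Icc 0 T, u i t ≤ w t := by
  have hrefl : ∀ t ∈ Icc 0 T, T - t ∈ Icc 0 T :=
    fun t ht => ⟨by linarith [ht.2], by linarith [ht.1]⟩
  have hreflect : ∀ (B : ℝ → ℝ) t, ∫ s in T - t..T, B (T - s) = ∫ s in (0 : ℝ)..t, B s := by
    intro B t
    simp [intervalIntegral.integral_comp_sub_left]
  have hreversed := le_supersolution_of_le_add_integral (u := fun i t => u i (T - t))
    (a := fun t => a (T - t)) (w := fun t => w (T - t)) (β := β) (by fun_prop)
    (fun i t ht => hM i _ (hrefl t ht)) ?_ ?_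
  · intro i t ht
    simpa using hreversed i (T - t) (hrefl t ht)
  · intro B hB t ht hBu i
    rw [← hreflect]
    refine hu (fun s => B (T - s)) (by fun_prop) (T - t) (hrefl t ht) (fun j s hs => ?_) i
    simpa using hBu j (T - s) ⟨by linarith [hs.2], by linarith [hs.1]⟩
  · intro t ht
    rw [← hreflect (fun s => w (T - s))]
    simpa using hw_super (T - t) (hrefl t ht)

theorem Measurable.comp₃ {α : Type*} [MeasurableSpace α] {g : ℝ → ℝ → ℝ → ℝ}
    (hg : Measurable fun q : ℝ × ℝ × ℝ => g q.1 q.2.1 q.2.2) {a b c : α → ℝ}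
    (ha : Measurable a) (hb : Measurable b) (hc : Measurable c) :
    Measurable fun z => g (a z) (b z) (c z) :=
  hg.comp (ha.prodMk (hb.prodMk hc))

theorem lintegral_ofReal_comp_add_right {h : ℝ → ℝ} (hh : Integrable h)
    (h_nonneg : ∀ x, 0 ≤ h x) (c : ℝ) :
    ∫⁻ x, ENNReal.ofReal (h (x + c)) = ENNReal.ofReal (∫ x, h x) := by
  rw [lintegral_add_right_eq_self (fun x => ENNReal.ofReal (h x)),
    ofReal_integral_eq_lintegral_ofReal hh (ae_of_all _ h_nonneg)]

local notation "𝕍" => ({1, -1} : Set ℝ)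

theorem abs_le_of_isMildF {T CK Cφ : ℝ} {K : ℝ → ℝ → ℝ → ℝ} {φ : ℝ → ℝ → ℝ}
    {f : ℝ → ℝ → ℝ → ℝ} (hK_nonneg : ∀ x v v', 0 ≤ K x v v') (hK_bdd : ∀ x v v', K x v v' ≤ CK)
    (hφ_bds : ∀ x v, 0 ≤ φ x v ∧ φ x v ≤ Cφ) (hf : IsMildF T K φ (fun _ _ _ => 0) f) :
    ∀ t ∈ Icc 0 T, ∀ x, ∀ v ∈ 𝕍, |f t x v| ≤ Cφ * exp (4 * CK * t) := by
  obtain ⟨-, ⟨M, hM⟩, hf_eq⟩ := hf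
  have hCK : 0 ≤ CK := (hK_nonneg 0 0 0).trans (hK_bdd 0 0 0)
  have hbound := le_supersolution_of_le_add_integral (ι := ℝ × 𝕍) (T := T) (β := 4 * CK)
    (u := fun i t => |f t i.1 i.2|) (a := fun _ => Cφ) (w := fun t => Cφ * exp (4 * CK * t))
    (by fun_prop) (fun i t _ => hM t i.1 i.2) ?_ ?_
  · exact fun t ht x v hv => hbound (x, ⟨v, hv⟩) t ht
  · rintro B hB t ht hfB ⟨x, v, hv⟩
    have hφ : |φ (x - v * t) v| ≤ Cφ :=
      abs_le.2 ⟨by linarith [hφ_bds (x - v * t) v], (hφ_bds _ _).2⟩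
    rw [hf_eq t ht x v hv, ← intervalIntegral.integral_const_mul]
    refine (abs_add_le _ _).trans (add_le_add hφ ?_)
    rw [← Real.norm_eq_abs]
    refine intervalIntegral.norm_integral_le_of_norm_le ht.1 (ae_of_all _ fun s hs => ?_)
      ((hB.const_mul (4 * CK)).intervalIntegrable _ _)
    have hfB' := fun w hw => hfB (x - v * (t - s), ⟨w, hw⟩) s ⟨hs.1.le, hs.2⟩
    rw [Real.norm_eq_abs, add_zero]
    refine (abs_gain_sub_loss_le (hK_nonneg _ _ _) (hK_nonneg _ _ _) (hK_nonneg _ _ _)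
      (hK_nonneg _ _ _) (hK_bdd _ _ _) (hK_bdd _ _ _) (hK_bdd _ _ _) (hK_bdd _ _ _)).trans
      ((mul_le_mul_of_nonneg_left (add_le_add (add_le_add (hfB' 1 (by simp))
        (hfB' (-1) (by simp))) (mul_le_mul_of_nonneg_left (hfB' v hv) zero_le_two)) hCK).trans_eq
        (by ring))
  · intro t _
    have hexp := integral_mul_exp_mul (4 * CK) t
    rw [intervalIntegral.integral_const_mul] at hexp ⊢
    linear_combination Cφ * hexp

theorem ofReal_abs_le_lintegral_of_isMildG {T CK t x v : ℝ} {K : ℝ → ℝ → ℝ → ℝ}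
    {p g : ℝ → ℝ → ℝ → ℝ} (hK_nonneg : ∀ x v v', 0 ≤ K x v v')
    (hK_bdd : ∀ x v v', K x v v' ≤ CK)
    (hg : IsMildG T K 0 (fun _ _ => 0)
      (fun s y v => K y 1 v * p s y 1 + K y (-1) v * p s y (-1)) g)
    (ht : t ∈ Icc 0 T) (hv : v ∈ 𝕍) :
    ENNReal.ofReal |g t x v| ≤ ∫⁻ s in Ioc t T, ENNReal.ofReal (CK * (|p s (x + v * (s - t)) 1|
      + |p s (x + v * (s - t)) (-1)| + 2 * |g s (x + v * (s - t)) v|)) := by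
  rw [hg.2.2.2 t ht x v hv, intervalIntegral.integral_of_le ht.2, ← Real.enorm_eq_ofReal_abs]
  simp only [zero_add, zero_mul, zero_sub, neg_add_eq_sub]
  refine (enorm_integral_le_lintegral_enorm _).trans (lintegral_mono fun s => ?_)
  rw [Real.enorm_eq_ofReal_abs]
  exact ENNReal.ofReal_le_ofReal (abs_gain_sub_loss_le (hK_nonneg _ _ _) (hK_nonneg _ _ _)
    (hK_nonneg _ _ _) (hK_nonneg _ _ _) (hK_bdd _ _ _) (hK_bdd _ _ _) (hK_bdd _ _ _)
    (hK_bdd _ _ _))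

theorem integral_abs_le_of_isMildG {T CK t : ℝ} {K : ℝ → ℝ → ℝ → ℝ} {p g : ℝ → ℝ → ℝ → ℝ}
    {B P : ℝ → ℝ} (hK_nonneg : ∀ x v v', 0 ≤ K x v v') (hK_bdd : ∀ x v v', K x v v' ≤ CK)
    (hp_meas : Measurable fun q : ℝ × ℝ × ℝ => p q.1 q.2.1 q.2.2)
    (hp_int : ∀ s ∈ Icc 0 T, ∀ v ∈ 𝕍, Integrable fun x => p s x v)
    (hg : IsMildG T K 0 (fun _ _ => 0)
      (fun s y v => K y 1 v * p s y 1 + K y (-1) v * p s y (-1)) g)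
    (hB : IntervalIntegrable B volume t T) (hP : IntervalIntegrable P volume t T)
    (ht : t ∈ Icc 0 T) (hgB : ∀ s ∈ Icc t T, ∀ v ∈ 𝕍, ∫ x, |g s x v| ≤ B s)
    (hpP : ∀ s ∈ Icc t T, ∀ v ∈ 𝕍, ∫ x, |p s x v| ≤ P s) :
    ∀ v ∈ 𝕍, ∫ x, |g t x v| ≤ 2 * CK * ∫ s in t..T, (B s + P s) := by
  obtain ⟨hg_meas, hg_int, -, -⟩ := id hg
  intro v hv
  have hCK : 0 ≤ CK := (hK_nonneg 0 0 0).trans (hK_bdd 0 0 0)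
  set H : ℝ → ℝ → ℝ := fun s y => CK * (|p s y 1| + |p s y (-1)| + 2 * |g s y v|)
  have hH_meas : Measurable fun q : ℝ × ℝ => ENNReal.ofReal (H q.2 (q.1 + v * (q.2 - t))) := by
    have hshift : Measurable fun q : ℝ × ℝ => q.1 + v * (q.2 - t) := by fun_prop
    exact ENNReal.measurable_ofReal.comp (measurable_const.mul
      (((hp_meas.comp₃ measurable_snd hshift measurable_const).abs.add
        (hp_meas.comp₃ measurable_snd hshift measurable_const).abs).add
        (measurable_const.mul (hg_meas.comp₃ measurable_snd hshift measurable_const).abs)))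
  have hslice : ∀ s ∈ Ioc t T, ∫⁻ x, ENNReal.ofReal (H s (x + v * (s - t)))
      ≤ ENNReal.ofReal (2 * CK * (B s + P s)) := by
    intro s hs
    have hs₀ : s ∈ Icc 0 T := ⟨ht.1.trans hs.1.le, hs.2⟩
    have hs' : s ∈ Icc t T := ⟨hs.1.le, hs.2⟩
    have hg_int' := (hg_int s hs₀ v hv).abs
    have hp_int₁ := (hp_int s hs₀ 1 (by simp)).abs
    have hp_int₂ := (hp_int s hs₀ (-1) (by simp)).abs
    have hH_int : Integrable (H s) :=
      ((hp_int₁.add hp_int₂).add (hg_int'.const_mul 2)).const_mul CK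
    rw [lintegral_ofReal_comp_add_right hH_int (fun y => by positivity)]
    refine ENNReal.ofReal_le_ofReal ?_
    rw [integral_const_mul, integral_add (f := fun x => |p s x 1| + |p s x (-1)|)
      (hp_int₁.add hp_int₂) (hg_int'.const_mul 2), integral_add hp_int₁ hp_int₂,
      integral_const_mul]
    nlinarith [hgB s hs' v hv, hpP s hs' 1 (by simp), hpP s hs' (-1) (by simp)]
  have hBP_nonneg : ∀ s ∈ Icc t T, 0 ≤ B s + P s := fun s hs =>
    add_nonneg ((integral_nonneg fun _ => abs_nonneg _).trans (hgB s hs v hv))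
      ((integral_nonneg fun _ => abs_nonneg _).trans (hpP s hs v hv))
  rw [← ENNReal.ofReal_le_ofReal_iff (mul_nonneg (by positivity)
      (intervalIntegral.integral_nonneg ht.2 hBP_nonneg)),
    ofReal_integral_eq_lintegral_ofReal (hg_int t ht v hv).abs
      (ae_of_all _ fun _ => abs_nonneg _),
    ← intervalIntegral.integral_const_mul, intervalIntegral.integral_of_le ht.2,
    ofReal_integral_eq_lintegral_ofReal ((hB.add hP).const_mul _).1
      ((ae_restrict_iff' measurableSet_Ioc).2 (ae_of_all _ fun s hs =>
        mul_nonneg (by positivity) (hBP_nonneg s ⟨hs.1.le, hs.2⟩)))]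
  calc ∫⁻ x, ENNReal.ofReal |g t x v|
      ≤ ∫⁻ x, ∫⁻ s in Ioc t T, ENNReal.ofReal (H s (x + v * (s - t))) :=
        lintegral_mono fun x => ofReal_abs_le_lintegral_of_isMildG hK_nonneg hK_bdd hg ht hv
    _ = ∫⁻ s in Ioc t T, ∫⁻ x, ENNReal.ofReal (H s (x + v * (s - t))) :=
        lintegral_lintegral_swap hH_meas.aemeasurable
    _ ≤ ∫⁻ s in Ioc t T, ENNReal.ofReal (2 * CK * (B s + P s)) :=
        setLIntegral_mono' measurableSet_Ioc hslice

theorem integral_abs_le_of_eq_exp_neg_integral_mul {T Cμ : ℝ} {K : ℝ → ℝ → ℝ → ℝ}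
    {μ₁ μ₂ : ℝ → ℝ} {g : ℝ → ℝ → ℝ → ℝ} (hK_nonneg : ∀ x v v', 0 ≤ K x v v')
    (hμ₁_int : Integrable μ₁) (hμ₂_int : Integrable μ₂)
    (hμ₁ : ∫ x, |μ₁ x| ≤ Cμ) (hμ₂ : ∫ x, |μ₂ x| ≤ Cμ)
    (hg : ∀ t ∈ Icc 0 T, ∀ x, ∀ v ∈ 𝕍, g t x v =
      exp (-∫ τ in (0 : ℝ)..(T - t), (K (x + v * τ) 1 v + K (x + v * τ) (-1) v)) *
        (μ₂ (x + v * (T - t)) - μ₁ (x + v * (T - t)))) :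
    ∀ t ∈ Icc 0 T, ∀ v ∈ 𝕍, ∫ x, |g t x v| ≤ 2 * Cμ := by
  intro t ht v hv
  have hpointwise : ∀ x, |g t x v| ≤ |μ₂ (x + v * (T - t))| + |μ₁ (x + v * (T - t))| := by
    intro x
    rw [hg t ht x v hv, abs_mul, abs_of_pos (exp_pos _)]
    have hdamping :
        exp (-∫ τ in (0 : ℝ)..(T - t), (K (x + v * τ) 1 v + K (x + v * τ) (-1) v)) ≤ 1 :=
      exp_le_one_iff.2 (neg_nonpos.2 (intervalIntegral.integral_nonneg (by linarith [ht.2])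
        fun τ _ => add_nonneg (hK_nonneg _ _ _) (hK_nonneg _ _ _)))
    exact (mul_le_of_le_one_left (abs_nonneg _) hdamping).trans (abs_sub _ _)
  have hμ₂_int' := (hμ₂_int.comp_add_right (v * (T - t))).abs
  have hμ₁_int' := (hμ₁_int.comp_add_right (v * (T - t))).abs
  calc ∫ x, |g t x v| ≤ ∫ x, (|μ₂ (x + v * (T - t))| + |μ₁ (x + v * (T - t))|) :=
        integral_mono_of_nonneg (ae_of_all _ fun _ => abs_nonneg _) (hμ₂_int'.add hμ₁_int')
          (ae_of_all _ hpointwise)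
    _ = (∫ x, |μ₂ x|) + ∫ x, |μ₁ x| := by
        rw [integral_add hμ₂_int' hμ₁_int', integral_add_right_eq_self (fun x => |μ₂ x|),
          integral_add_right_eq_self (fun x => |μ₁ x|)]
    _ ≤ 2 * Cμ := by linarith

theorem integral_abs_le_of_isMildG_source {T CK c : ℝ} {K : ℝ → ℝ → ℝ → ℝ}
    {q g : ℝ → ℝ → ℝ → ℝ} (hK_nonneg : ∀ x v v', 0 ≤ K x v v')
    (hK_bdd : ∀ x v v', K x v v' ≤ CK) (hc : 0 ≤ c)
    (hq_meas : Measurable fun p : ℝ × ℝ × ℝ => q p.1 p.2.1 p.2.2)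
    (hq_int : ∀ s ∈ Icc 0 T, ∀ v ∈ 𝕍, Integrable fun x => q s x v)
    (hq : ∀ s ∈ Icc 0 T, ∀ v ∈ 𝕍, ∫ x, |q s x v| ≤ c * exp (2 * CK * (T - s)))
    (hg : IsMildG T K 0 (fun _ _ => 0)
      (fun s y v => K y 1 v * q s y 1 + K y (-1) v * q s y (-1)) g) :
    ∀ t ∈ Icc 0 T, ∀ v ∈ 𝕍,
      ∫ x, |g t x v| ≤ c * (exp (2 * CK * T) - 1) * exp (2 * CK * (T - t)) := by
  obtain ⟨M, hM⟩ := hg.2.2.1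
  have hCK : 0 ≤ CK := (hK_nonneg 0 0 0).trans (hK_bdd 0 0 0)
  have hsource : Continuous fun s => c * exp (2 * CK * (T - s)) := by fun_prop
  have hbound := le_supersolution_of_le_add_integral_backward (ι := 𝕍) (T := T) (β := 2 * CK)
    (u := fun v t => ∫ x, |g t x v|)
    (a := fun t => 2 * CK * ∫ s in t..T, c * exp (2 * CK * (T - s)))
    (w := fun t => c * (exp (2 * CK * T) - 1) * exp (2 * CK * (T - t)))
    (by fun_prop) (fun v t ht => hM t ht v v.2) ?_ ?_
  · exact fun t ht v hv => hbound ⟨v, hv⟩ t ht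
  · rintro B hB t ht hgB ⟨v, hv⟩
    refine (integral_abs_le_of_isMildG hK_nonneg hK_bdd hq_meas hq_int hg
      (hB.intervalIntegrable _ _) (hsource.intervalIntegrable _ _) ht
      (fun s hs w hw => hgB ⟨w, hw⟩ s hs) (fun s hs w hw => hq s ⟨ht.1.trans hs.1, hs.2⟩ w hw)
      v hv).trans_eq ?_
    rw [intervalIntegral.integral_add (hB.intervalIntegrable _ _)
      (hsource.intervalIntegrable _ _)]
    ring
  · intro t ht
    have hexp := integral_mul_exp_mul_sub (2 * CK) t T
    have hmono : exp (2 * CK * (T - t)) ≤ exp (2 * CK * T) := exp_le_exp.2 (by nlinarith [ht.1])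
    simp only [intervalIntegral.integral_const_mul] at hexp ⊢
    linear_combination (c * exp (2 * CK * T)) * hexp + mul_le_mul_of_nonneg_left hmono hc

theorem integral_abs_le_of_isMildG_source_add_self {T CK c : ℝ} {K : ℝ → ℝ → ℝ → ℝ}
    {q g : ℝ → ℝ → ℝ → ℝ} (hK_nonneg : ∀ x v v', 0 ≤ K x v v')
    (hK_bdd : ∀ x v v', K x v v' ≤ CK)
    (hq_meas : Measurable fun p : ℝ × ℝ × ℝ => q p.1 p.2.1 p.2.2)
    (hq_int : ∀ s ∈ Icc 0 T, ∀ v ∈ 𝕍, Integrable fun x => q s x v)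
    (hq : ∀ s ∈ Icc 0 T, ∀ v ∈ 𝕍, ∫ x, |q s x v| ≤ c * exp (2 * CK * (T - s)))
    (hg : IsMildG T K 0 (fun _ _ => 0)
      (fun s y v => K y 1 v * (q s y 1 + g s y 1) + K y (-1) v * (q s y (-1) + g s y (-1))) g) :
    ∀ t ∈ Icc 0 T, ∀ v ∈ 𝕍,
      ∫ x, |g t x v| ≤ c * (exp (4 * CK * (T - t)) - exp (2 * CK * (T - t))) := by
  obtain ⟨hg_meas, hg_int, ⟨M, hM⟩, -⟩ := id hg
  have hsource : Continuous fun s => c * exp (2 * CK * (T - s)) := by fun_prop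
  have hbound := le_supersolution_of_le_add_integral_backward (ι := 𝕍) (T := T) (β := 4 * CK)
    (u := fun v t => ∫ x, |g t x v|)
    (a := fun t => 2 * CK * ∫ s in t..T, c * exp (2 * CK * (T - s)))
    (w := fun t => c * (exp (4 * CK * (T - t)) - exp (2 * CK * (T - t))))
    (by fun_prop) (fun v t ht => hM t ht v v.2) ?_ ?_
  · exact fun t ht v hv => hbound ⟨v, hv⟩ t ht
  · rintro B hB t ht hgB ⟨v, hv⟩
    have hP : Continuous fun s => c * exp (2 * CK * (T - s)) + B s := hsource.add hB
    have hsum_int : ∀ s ∈ Icc 0 T, ∀ w ∈ 𝕍, Integrable fun x => q s x w + g s x w :=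
      fun s hs w hw => (hq_int s hs w hw).add (hg_int s hs w hw)
    have hsum_le : ∀ s ∈ Icc t T, ∀ w ∈ 𝕍,
        ∫ x, |q s x w + g s x w| ≤ c * exp (2 * CK * (T - s)) + B s := by
      intro s hs w hw
      have hs₀ : s ∈ Icc 0 T := ⟨ht.1.trans hs.1, hs.2⟩
      calc ∫ x, |q s x w + g s x w| ≤ ∫ x, (|q s x w| + |g s x w|) :=
            integral_mono (hsum_int s hs₀ w hw).abs ((hq_int s hs₀ w hw).abs.add
              (hg_int s hs₀ w hw).abs) fun x => abs_add_le _ _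
        _ = (∫ x, |q s x w|) + ∫ x, |g s x w| :=
            integral_add (hq_int s hs₀ w hw).abs (hg_int s hs₀ w hw).abs
        _ ≤ c * exp (2 * CK * (T - s)) + B s :=
            add_le_add (hq s hs₀ w hw) (hgB ⟨w, hw⟩ s hs)
    refine (integral_abs_le_of_isMildG (p := fun s y w => q s y w + g s y w)
      (P := fun s => c * exp (2 * CK * (T - s)) + B s) hK_nonneg hK_bdd
      (hq_meas.add hg_meas) hsum_int hg (hB.intervalIntegrable _ _) (hP.intervalIntegrable _ _)
      ht (fun s hs w hw => hgB ⟨w, hw⟩ s hs) hsum_le v hv).trans_eq ?_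
    rw [intervalIntegral.integral_add (hB.intervalIntegrable _ _) (hP.intervalIntegrable _ _),
      intervalIntegral.integral_add (hsource.intervalIntegrable _ _) (hB.intervalIntegrable _ _)]
    ring
  · intro t _
    have hexp₂ := integral_mul_exp_mul_sub (2 * CK) t T
    have hexp₄ := integral_mul_exp_mul_sub (4 * CK) t T
    simp only [intervalIntegral.integral_const_mul] at hexp₂ hexp₄ ⊢
    rw [intervalIntegral.integral_sub ((by fun_prop : Continuous fun s =>
        exp (4 * CK * (T - s))).intervalIntegrable _ _)
      ((by fun_prop : Continuous fun s => exp (2 * CK * (T - s))).intervalIntegrable _ _)]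
    linear_combination c * hexp₄ - c * hexp₂

theorem abs_integral_setIntegral_mul_le {T CK Cφ c : ℝ} {I : Set ℝ} {f g : ℝ → ℝ → ℝ}
    (hT : 0 ≤ T) (hCφ : 0 ≤ Cφ) (hc : 0 ≤ c)
    (hf : ∀ t ∈ Icc 0 T, ∀ x, |f t x| ≤ Cφ * exp (4 * CK * t))
    (hg_int : ∀ t ∈ Icc 0 T, Integrable (g t))
    (hg : ∀ t ∈ Icc 0 T,
      ∫ x, |g t x| ≤ c * (exp (4 * CK * (T - t)) - exp (2 * CK * (T - t)))) :
    |∫ t in (0 : ℝ)..T, ∫ x in I, f t x * g t x| ≤ T ^ 2 * CK * Cφ * exp (4 * CK * T) * c := by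
  have hslice : ∀ t ∈ Ioc 0 T,
      ‖∫ x in I, f t x * g t x‖ ≤ 2 * CK * Cφ * exp (4 * CK * T) * c * (T - t) := by
    intro t ht
    have ht' : t ∈ Icc 0 T := Ioc_subset_Icc_self ht
    have hexp := exp_two_mul_sub_exp_le (2 * CK * (T - t))
    rw [show 2 * (2 * CK * (T - t)) = 4 * CK * (T - t) by ring] at hexp
    calc ‖∫ x in I, f t x * g t x‖ ≤ ∫ x in I, Cφ * exp (4 * CK * t) * |g t x| :=
          norm_integral_le_of_norm_le ((hg_int t ht').abs.const_mul _).restrict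
            (ae_of_all _ fun x => by
              rw [norm_mul, Real.norm_eq_abs, Real.norm_eq_abs]
              exact mul_le_mul_of_nonneg_right (hf t ht' x) (abs_nonneg _))
      _ ≤ Cφ * exp (4 * CK * t) * ∫ x, |g t x| := by
          rw [integral_const_mul]
          exact mul_le_mul_of_nonneg_left (setIntegral_le_integral (hg_int t ht').abs
            (ae_of_all _ fun _ => abs_nonneg _)) (by positivity)
      _ ≤ Cφ * exp (4 * CK * t) * (c * (2 * CK * (T - t) * exp (4 * CK * (T - t)))) := by
          gcongr
          exact (hg t ht').trans (by gcongr)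
      _ = 2 * CK * Cφ * exp (4 * CK * T) * c * (T - t) := by
          rw [show 4 * CK * T = 4 * CK * t + 4 * CK * (T - t) by ring, exp_add]
          ring
  refine (intervalIntegral.norm_integral_le_of_norm_le hT (ae_of_all _ hslice)
    ((by fun_prop : Continuous fun t =>
      2 * CK * Cφ * exp (4 * CK * T) * c * (T - t)).intervalIntegrable _ _)).trans_eq ?_
  rw [intervalIntegral.integral_const_mul, intervalIntegral.integral_sub intervalIntegrable_const
    intervalIntegral.intervalIntegrable_id, integral_id, intervalIntegral.integral_const]
  simp only [smul_eq_mul, sub_zero]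
  ring

theorem singular_decomposition_remainder_bound_general
    (T CK Cφ Cμ : ℝ) (N : ℕ)
    (hT : 0 < T)
    (K : ℝ → ℝ → ℝ → ℝ)
    (hK_nonneg : ∀ x v v', 0 ≤ K x v v') (hK_bdd : ∀ x v v', K x v v' ≤ CK)
    (μ₁ μ₂ : ℝ → ℝ) (hμ₁_int : Integrable μ₁) (hμ₂_int : Integrable μ₂)
    (hμ₁ : (∫ x : ℝ, |μ₁ x|) ≤ Cμ) (hμ₂ : (∫ x : ℝ, |μ₂ x|) ≤ Cμ)
    (gbar : ℕ → ℝ → ℝ → ℝ → ℝ)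
    (hgbar0_meas : Measurable fun p : ℝ × ℝ × ℝ => gbar 0 p.1 p.2.1 p.2.2)
    (hgbar0_int : ∀ t ∈ Set.Icc (0 : ℝ) T, ∀ v ∈ ({1, -1} : Set ℝ),
      Integrable (fun x => gbar 0 t x v))
    (hgbar0 : ∀ t ∈ Set.Icc (0 : ℝ) T, ∀ x : ℝ, ∀ v ∈ ({1, -1} : Set ℝ),
      gbar 0 t x v =
        Real.exp (-∫ τ in (0 : ℝ)..(T - t), (K (x + v * τ) 1 v + K (x + v * τ) (-1) v)) *
          (μ₂ (x + v * (T - t)) - μ₁ (x + v * (T - t))))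
    (hgbar_rec : ∀ n : ℕ, IsMildG T K 0 (fun _ _ => 0)
      (fun s y v => K y 1 v * gbar n s y 1 + K y (-1) v * gbar n s y (-1)) (gbar (n + 1)))
    (grem : ℝ → ℝ → ℝ → ℝ)
    (hgrem : IsMildG T K 0 (fun _ _ => 0)
      (fun s y v => K y 1 v * (gbar N s y 1 + grem s y 1)
        + K y (-1) v * (gbar N s y (-1) + grem s y (-1))) grem)
    (φ : ℝ → ℝ → ℝ) (hφ_bds : ∀ x v, 0 ≤ φ x v ∧ φ x v ≤ Cφ)
    (f : ℝ → ℝ → ℝ → ℝ) (hf : IsMildF T K φ (fun _ _ _ => 0) f) :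
    ∀ I : Set ℝ, MeasurableSet I →
      ∀ v ∈ ({1, -1} : Set ℝ), ∀ v' ∈ ({1, -1} : Set ℝ),
        |∫ t in (0 : ℝ)..T, ∫ x in I, f t x v' * grem t x v|
          ≤ 2 * T ^ 2 * CK * Cφ * Real.exp (4 * CK * T)
              * (Real.exp (2 * CK * T) - 1) ^ N * Cμ := by
  intro I _ v hv v' hv'
  have hCK : 0 ≤ CK := (hK_nonneg 0 0 0).trans (hK_bdd 0 0 0)
  have hCμ : 0 ≤ Cμ := (integral_nonneg fun _ => abs_nonneg _).trans hμ₁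
  have hA : 0 ≤ exp (2 * CK * T) - 1 := sub_nonneg.2 (one_le_exp (by positivity))
  have hgbar_meas : ∀ n, Measurable fun p : ℝ × ℝ × ℝ => gbar n p.1 p.2.1 p.2.2 := by
    rintro (_ | n)
    exacts [hgbar0_meas, (hgbar_rec n).1]
  have hgbar_int : ∀ n, ∀ t ∈ Icc 0 T, ∀ w ∈ 𝕍, Integrable fun x => gbar n t x w := by
    rintro (_ | n)
    exacts [hgbar0_int, (hgbar_rec n).2.1]
  have hgbar : ∀ n : ℕ, ∀ t ∈ Icc 0 T, ∀ w ∈ 𝕍,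
      ∫ x, |gbar n t x w| ≤ 2 * Cμ * (exp (2 * CK * T) - 1) ^ n * exp (2 * CK * (T - t)) := by
    intro n
    induction n with
    | zero =>
      intro t ht w hw
      rw [pow_zero, mul_one]
      exact (integral_abs_le_of_eq_exp_neg_integral_mul hK_nonneg hμ₁_int hμ₂_int hμ₁ hμ₂
        hgbar0 t ht w hw).trans
        (le_mul_of_one_le_right (by positivity) (one_le_exp (by nlinarith [ht.2])))
    | succ n ih =>
      intro t ht w hw
      exact (integral_abs_le_of_isMildG_source hK_nonneg hK_bdd
        (by positivity) (hgbar_meas n) (hgbar_int n) ih (hgbar_rec n) t ht w hw).trans_eq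
        (by ring)
  have hgrem_bound := integral_abs_le_of_isMildG_source_add_self hK_nonneg hK_bdd
    (hgbar_meas N) (hgbar_int N) (hgbar N) hgrem
  have hf_bound := abs_le_of_isMildF hK_nonneg hK_bdd hφ_bds hf
  exact (abs_integral_setIntegral_mul_le hT.le ((hφ_bds 0 0).1.trans (hφ_bds 0 0).2)
    (by positivity) (fun t ht x => hf_bound t ht x v' hv') (fun t ht => hgrem.2.1 t ht v hv)
    (fun t ht => hgrem_bound t ht v hv)).trans_eq (by ring)

/-- bound on the contribution of the remainder `ḡ_{>N}` of the singular
decomposition of the adjoint solution with final datum `μ₂ − μ₁`: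
`|∫₀ᵀ∫_I f(v') ḡ_{>N}(v) dx dt| ≤ 2 T² C_K C_φ e^{4C_K T} (e^{2C_K T} − 1)^N C_μ`. -/
theorem singular_decomposition_remainder_bound
    (T CK Cφ Cμ : ℝ) (N : ℕ)
    (hT : 0 < T) (hCK : 0 < CK) (hCφ : 0 ≤ Cφ)
    (K : ℝ → ℝ → ℝ → ℝ)
    (hK_meas : Measurable fun p : ℝ × ℝ × ℝ => K p.1 p.2.1 p.2.2)
    (hK_nonneg : ∀ x v v', 0 ≤ K x v v') (hK_bdd : ∀ x v v', K x v v' ≤ CK)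
    (μ₁ μ₂ : ℝ → ℝ) (hμ₁_int : Integrable μ₁) (hμ₂_int : Integrable μ₂)
    (hμ₁ : (∫ x : ℝ, |μ₁ x|) ≤ Cμ) (hμ₂ : (∫ x : ℝ, |μ₂ x|) ≤ Cμ)
    (gbar : ℕ → ℝ → ℝ → ℝ → ℝ)
    (hgbar0_meas : Measurable fun p : ℝ × ℝ × ℝ => gbar 0 p.1 p.2.1 p.2.2)
    (hgbar0_int : ∀ t ∈ Set.Icc (0 : ℝ) T, ∀ v ∈ ({1, -1} : Set ℝ),
      Integrable (fun x => gbar 0 t x v))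
    (hgbar0 : ∀ t ∈ Set.Icc (0 : ℝ) T, ∀ x : ℝ, ∀ v ∈ ({1, -1} : Set ℝ),
      gbar 0 t x v =
        Real.exp (-∫ τ in (0 : ℝ)..(T - t), (K (x + v * τ) 1 v + K (x + v * τ) (-1) v)) *
          (μ₂ (x + v * (T - t)) - μ₁ (x + v * (T - t))))
    (hgbar_rec : ∀ n : ℕ, IsMildG T K 0 (fun _ _ => 0)
      (fun s y v => K y 1 v * gbar n s y 1 + K y (-1) v * gbar n s y (-1)) (gbar (n + 1)))
    (grem : ℝ → ℝ → ℝ → ℝ)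
    (hgrem : IsMildG T K 0 (fun _ _ => 0)
      (fun s y v => K y 1 v * (gbar N s y 1 + grem s y 1)
        + K y (-1) v * (gbar N s y (-1) + grem s y (-1))) grem)
    (φ : ℝ → ℝ → ℝ) (hφ_bds : ∀ x v, 0 ≤ φ x v ∧ φ x v ≤ Cφ)
    (f : ℝ → ℝ → ℝ → ℝ) (hf : IsMildF T K φ (fun _ _ _ => 0) f) :
    ∀ I : Set ℝ, MeasurableSet I →
      ∀ v ∈ ({1, -1} : Set ℝ), ∀ v' ∈ ({1, -1} : Set ℝ),
        |∫ t in (0 : ℝ)..T, ∫ x in I, f t x v' * grem t x v|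
          ≤ 2 * T ^ 2 * CK * Cφ * Real.exp (4 * CK * T)
              * (Real.exp (2 * CK * T) - 1) ^ N * Cμ :=
  singular_decomposition_remainder_bound_general T CK Cφ Cμ N hT K hK_nonneg hK_bdd μ₁ μ₂ hμ₁_int
    hμ₂_int hμ₁ hμ₂ gbar hgbar0_meas hgbar0_int hgbar0 hgbar_rec grem hgrem φ hφ_bds f hf
end
end

section
/- Finite speed of propagation: let K be measurable with 0 ≤ K ≤ C_K. (i) If φ is bounded measurable with φ(x,v) = 0 for all v ∈ V whenever x ∉ [c−d, c+d], and f is a bounded measurable mild solution of the homogeneous kinetic equation with initial datum φ, then f(t,x,v) = 0 for all t ∈ [0,T], v ∈ V and x ∉ [c−d−t, c+d+t]. (ii) If ψ is bounded measurable with ψ(x,v) = 0 for all v whenever x ∉ [c−d, c+d], and g is a bounded measurable mild solution of the adjoint kinetic equation −∂_t g − v ∂_x g = L̃(g) − σ g with final datum ψ, then g(t,x,v) = 0 for all t ∈ [0,T], v ∈ V and x ∉ [c−d−(T−t), c+d+(T−t)]. -/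
open MeasureTheory Real Set Filter

noncomputable section

/-!
Characteristics move at speed one, so a point outside the cone `[c - d - t, c + d + t]` is reached
only from points outside the cones of earlier times, and there the datum term of the mild
formulation vanishes. The collision term is bounded by `3 C_K` times the solution along the
characteristic, so on a time window of length `δ` with `6 C_K δ ≤ 1 / 2` any uniform bound of the
solution outside the cone halves when fed through the mild formulation: the bounded solution
vanishes there, window after window. The adjoint equation becomes the forward one after reversing
time and velocity.
-/

lemma notMem_Icc_sub_mul_of_notMem_Icc {a b x w s t : ℝ} (hw : |w| ≤ 1) (hst : s ≤ t)
    (hx : x ∉ Icc (a - t) (b + t)) : x - w * (t - s) ∉ Icc (a - s) (b + s) := by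
  have hdisp : |w * (t - s)| ≤ t - s := by
    rw [abs_mul, abs_of_nonneg (sub_nonneg.2 hst)]
    exact mul_le_of_le_one_left (sub_nonneg.2 hst) hw
  rw [abs_le] at hdisp
  simp only [mem_Icc, not_and_or, not_le] at hx ⊢
  rcases hx with hx | hx
  · left; linarith
  · right; linarith

lemma abs_le_one_of_mem_pair {v : ℝ} (hv : v ∈ ({1, -1} : Set ℝ)) : |v| ≤ 1 := by
  rcases hv with rfl | rfl <;> simp

lemma eq_zero_of_forall_abs_le_div_two_pow {x C : ℝ} (h : ∀ n : ℕ, |x| ≤ C / 2 ^ n) : x = 0 := by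
  have hlim : Tendsto (fun n : ℕ => C / 2 ^ n) atTop (nhds 0) :=
    tendsto_const_nhds.div_atTop (tendsto_pow_atTop_atTop_of_one_lt one_lt_two)
  exact abs_nonpos_iff.mp (ge_of_tendsto' hlim h)

lemma intervalIntegral_eq_of_eqOn_Ioo_zero {f : ℝ → ℝ} {a b c : ℝ} (hac : a ≤ c) (hcb : c ≤ b)
    (hf : EqOn f 0 (Ioo a c)) : ∫ x in a..b, f x = ∫ x in c..b, f x := by
  by_cases hint : IntervalIntegrable f volume c b
  · have hint₀ : IntervalIntegrable f volume a c := by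
      rw [intervalIntegrable_iff_integrableOn_Ioo_of_le hac]
      exact integrableOn_zero.congr_fun hf.symm measurableSet_Ioo
    have hzero : ∫ x in a..c, f x = 0 := by
      rw [intervalIntegral.integral_of_le hac, integral_Ioc_eq_integral_Ioo]
      exact setIntegral_eq_zero_of_forall_eq_zero hf
    rw [← intervalIntegral.integral_add_adjacent_intervals hint₀ hint, hzero, zero_add]
  · have hint' : ¬ IntervalIntegrable f volume a b := fun h => hint (h.mono_set (by
      rw [uIcc_of_le (hac.trans hcb), uIcc_of_le hcb]
      exact Icc_subset_Icc hac le_rfl))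
    rw [intervalIntegral.integral_undef hint, intervalIntegral.integral_undef hint']

lemma abs_intervalIntegral_le_of_eqOn_Ioo_zero {f : ℝ → ℝ} {a b c M : ℝ} (hac : a ≤ c)
    (hcb : c ≤ b) (hf : EqOn f 0 (Ioo a c)) (hM : ∀ x ∈ Ioc c b, |f x| ≤ M) :
    |∫ x in a..b, f x| ≤ M * (b - c) := by
  rw [intervalIntegral_eq_of_eqOn_Ioo_zero hac hcb hf, ← abs_of_nonneg (sub_nonneg.2 hcb)]
  refine intervalIntegral.norm_integral_le_of_norm_le_const (f := f) fun x hx => ?_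
  exact hM x (by rwa [uIoc_of_le hcb] at hx)

def LocalGronwall {X : Type*} (u : ℝ → X → ℝ) (A : ℝ → Set X) (T a : ℝ) : Prop :=
  ∀ t ∈ Icc 0 T, ∀ t₀ ∈ Icc 0 t, ∀ B : ℝ,
    (∀ s ∈ Ico 0 t₀, ∀ p ∈ A s, u s p = 0) →
    (∀ s ∈ Icc t₀ t, ∀ p ∈ A s, |u s p| ≤ B) →
    ∀ p ∈ A t, |u t p| ≤ a * B * (t - t₀)

namespace LocalGronwall

variable {X : Type*} {u : ℝ → X → ℝ} {A : ℝ → Set X} {T a C : ℝ}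

lemma eq_zero_of_eq_zero_before (h : LocalGronwall u A T a) (ha : 0 ≤ a)
    (hC : ∀ t ∈ Icc 0 T, ∀ p ∈ A t, |u t p| ≤ C) {t₀ δ : ℝ} (ht₀ : 0 ≤ t₀)
    (haδ : a * δ ≤ 1 / 2) (h₀ : ∀ s ∈ Icc 0 T, s < t₀ → ∀ p ∈ A s, u s p = 0) :
    ∀ s ∈ Icc 0 T, s < t₀ + δ → ∀ p ∈ A s, u s p = 0 := by
  have halving : ∀ n : ℕ, ∀ s ∈ Icc 0 T, s < t₀ + δ → ∀ p ∈ A s, |u s p| ≤ C / 2 ^ n := by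
    intro n
    induction n with
    | zero => simpa using fun s hs _ => hC s hs
    | succ n ih =>
      intro s hs hsδ p hp
      have hB : 0 ≤ C / 2 ^ n := (abs_nonneg _).trans (ih s hs hsδ p hp)
      have hhalf : C / 2 ^ (n + 1) = 1 / 2 * (C / 2 ^ n) := by rw [pow_succ]; ring
      rcases lt_or_ge s t₀ with hlt | hge
      · rw [h₀ s hs hlt p hp, abs_zero, hhalf]
        positivity
      have hbound := h s hs t₀ ⟨ht₀, hge⟩ (C / 2 ^ n)
        (fun r hr => h₀ r ⟨hr.1, hr.2.le.trans (hge.trans hs.2)⟩ hr.2)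
        (fun r hr => ih r ⟨ht₀.trans hr.1, hr.2.trans hs.2⟩ (hr.2.trans_lt hsδ)) p hp
      calc |u s p| ≤ a * (C / 2 ^ n) * (s - t₀) := hbound
        _ ≤ a * (C / 2 ^ n) * δ := by gcongr; linarith
        _ = a * δ * (C / 2 ^ n) := by ring
        _ ≤ C / 2 ^ (n + 1) := by rw [hhalf]; gcongr
  exact fun s hs hsδ p hp => eq_zero_of_forall_abs_le_div_two_pow fun n => halving n s hs hsδ p hp

lemma eq_zero (h : LocalGronwall u A T a) (ha : 0 ≤ a)
    (hC : ∀ t ∈ Icc 0 T, ∀ p ∈ A t, |u t p| ≤ C) : ∀ t ∈ Icc 0 T, ∀ p ∈ A t, u t p = 0 := by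
  set δ : ℝ := 1 / (2 * a + 2)
  have hδ : 0 < δ := by positivity
  have haδ : a * δ ≤ 1 / 2 := by
    rw [mul_one_div, div_le_div_iff₀ (by positivity) two_pos]
    linarith
  have hwindows : ∀ m : ℕ, ∀ s ∈ Icc 0 T, s < m * δ → ∀ p ∈ A s, u s p = 0 := by
    intro m
    induction m with
    | zero => exact fun s hs hs0 => absurd hs.1 (by simpa using hs0)
    | succ m ih =>
      rw [Nat.cast_succ, add_one_mul]
      exact h.eq_zero_of_eq_zero_before ha hC (by positivity) haδ ih
  intro t ht p hp
  obtain ⟨m, hm⟩ := exists_nat_gt (t / δ)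
  exact hwindows m t ht ((div_lt_iff₀ hδ).mp hm) p hp

end LocalGronwall

section Cone

variable {u : ℝ → ℝ → ℝ → ℝ} {T a c d : ℝ}

/-- The form shared, outside the cone, by the forward and the time-reversed adjoint mild
formulations. -/
def IsConeRepresentation (u : ℝ → ℝ → ℝ → ℝ) (T a c d : ℝ) : Prop :=
  ∀ t ∈ Icc 0 T, ∀ x ∉ Icc (c - d - t) (c + d + t), ∀ v ∈ ({1, -1} : Set ℝ),
    ∃ w : ℝ, |w| ≤ 1 ∧ ∃ H : ℝ → ℝ, u t x v = ∫ s in (0 : ℝ)..t, H s ∧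
      ∀ s ∈ Icc 0 t, |H s| ≤ a * (|u s (x - w * (t - s)) 1| + |u s (x - w * (t - s)) (-1)|)

lemma IsConeRepresentation.localGronwall (hrep : IsConeRepresentation u T a c d) (ha : 0 ≤ a) :
    LocalGronwall (fun t (p : ℝ × ℝ) => u t p.1 p.2)
      (fun t => {p | p.1 ∉ Icc (c - d - t) (c + d + t) ∧ p.2 ∈ ({1, -1} : Set ℝ)}) T (2 * a) := by
  rintro t ht t₀ ht₀ B h₀ hB ⟨x, v⟩ ⟨hx, hv⟩
  obtain ⟨w, hw, H, hu, hH⟩ := hrep t ht x hx v hv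
  have hy : ∀ s ∈ Icc 0 t, x - w * (t - s) ∉ Icc (c - d - s) (c + d + s) :=
    fun s hs => notMem_Icc_sub_mul_of_notMem_Icc hw hs.2 hx
  dsimp only
  rw [hu]
  refine abs_intervalIntegral_le_of_eqOn_Ioo_zero ht₀.1 ht₀.2 (fun s hs => ?_) (fun s hs => ?_)
  · have hs' : s ∈ Icc 0 t := ⟨hs.1.le, hs.2.le.trans ht₀.2⟩
    have hHs := hH s hs'
    have hzero : ∀ v' ∈ ({1, -1} : Set ℝ), u s (x - w * (t - s)) v' = 0 :=
      fun v' hv' => h₀ s ⟨hs.1.le, hs.2⟩ (_, v') ⟨hy s hs', hv'⟩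
    rw [hzero 1 (by simp), hzero (-1) (by simp)] at hHs
    simpa using hHs
  · have hs' : s ∈ Icc 0 t := ⟨ht₀.1.trans hs.1.le, hs.2⟩
    have hs'' : s ∈ Icc t₀ t := ⟨hs.1.le, hs.2⟩
    calc |H s| ≤ a * (|u s (x - w * (t - s)) 1| + |u s (x - w * (t - s)) (-1)|) := hH s hs'
      _ ≤ a * (B + B) := by
        gcongr
        · exact hB s hs'' (_, 1) ⟨hy s hs', by simp⟩
        · exact hB s hs'' (_, -1) ⟨hy s hs', by simp⟩
      _ = 2 * a * B := by ring

lemma IsConeRepresentation.eq_zero (hrep : IsConeRepresentation u T a c d) (ha : 0 ≤ a)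
    (hbdd : ∃ C, ∀ t x v, |u t x v| ≤ C) :
    ∀ t ∈ Icc 0 T, ∀ v ∈ ({1, -1} : Set ℝ), ∀ x ∉ Icc (c - d - t) (c + d + t), u t x v = 0 := by
  obtain ⟨C, hC⟩ := hbdd
  exact fun t ht v hv x hx => (hrep.localGronwall ha).eq_zero (by positivity)
    (fun s _ p _ => hC s p.1 p.2) t ht (x, v) ⟨hx, hv⟩

end Cone

lemma abs_gain_sub_loss_le_s14 {κ k₁ k₂ k₃ k₄ p q r : ℝ} (hk₁ : k₁ ∈ Icc 0 κ) (hk₂ : k₂ ∈ Icc 0 κ)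
    (hk₃ : k₃ ∈ Icc 0 κ) (hk₄ : k₄ ∈ Icc 0 κ) (hr : r = p ∨ r = q) :
    |k₁ * p + k₂ * q - (k₃ + k₄) * r| ≤ 3 * κ * (|p| + |q|) := by
  have hmul : ∀ {k m : ℝ}, k ∈ Icc 0 m → ∀ z, |k * z| ≤ m * |z| := fun hk z => by
    rw [abs_mul, abs_of_nonneg hk.1]
    exact mul_le_mul_of_nonneg_right hk.2 (abs_nonneg z)
  have hr' : |r| ≤ |p| + |q| := by
    rcases hr with rfl | rfl <;> simp
  have hκ : 0 ≤ κ := hk₁.1.trans hk₁.2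
  have hloss := hmul ⟨add_nonneg hk₃.1 hk₄.1, add_le_add hk₃.2 hk₄.2⟩ r
  calc |k₁ * p + k₂ * q - (k₃ + k₄) * r|
      ≤ |k₁ * p| + |k₂ * q| + |(k₃ + k₄) * r| :=
        (abs_sub _ _).trans (by gcongr; exact abs_add_le _ _)
    _ ≤ κ * |p| + κ * |q| + (κ + κ) * (|p| + |q|) := by
        gcongr
        exacts [hmul hk₁ p, hmul hk₂ q, hloss.trans (by gcongr)]
    _ = 3 * κ * (|p| + |q|) := by ring

section Kinetic

variable {T CK c d : ℝ} {K : ℝ → ℝ → ℝ → ℝ}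

lemma IsMildF.eq_zero_outside_cone (hK_nonneg : ∀ x v v', 0 ≤ K x v v')
    (hK_bdd : ∀ x v v', K x v v' ≤ CK) {φ : ℝ → ℝ → ℝ}
    (hφ_supp : ∀ x : ℝ, x ∉ Icc (c - d) (c + d) → ∀ v, φ x v = 0) {f : ℝ → ℝ → ℝ → ℝ}
    (hf : IsMildF T K φ (fun _ _ _ => 0) f) :
    ∀ t ∈ Icc 0 T, ∀ v ∈ ({1, -1} : Set ℝ), ∀ x ∉ Icc (c - d - t) (c + d + t), f t x v = 0 := by
  obtain ⟨-, hbdd, hmild⟩ := hf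
  have hK : ∀ x v v', K x v v' ∈ Icc 0 CK := fun x v v' => ⟨hK_nonneg x v v', hK_bdd x v v'⟩
  have hCK : 0 ≤ CK := (hK_nonneg 0 0 0).trans (hK_bdd 0 0 0)
  refine IsConeRepresentation.eq_zero (a := 3 * CK) (fun t ht x hx v hv => ?_)
    (by positivity) hbdd
  have hw := abs_le_one_of_mem_pair hv
  have hdatum : x - v * t ∉ Icc (c - d) (c + d) := by
    simpa using notMem_Icc_sub_mul_of_notMem_Icc hw ht.1 hx
  have hrep := hmild t ht x v hv
  rw [hφ_supp _ hdatum, zero_add] at hrep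
  refine ⟨v, hw, _, hrep, fun s _ => ?_⟩
  rw [add_zero]
  exact abs_gain_sub_loss_le_s14 (hK ..) (hK ..) (hK ..) (hK ..) (by rcases hv with rfl | rfl <;> simp)

lemma IsMildGb.eq_zero_outside_cone (hK_nonneg : ∀ x v v', 0 ≤ K x v v')
    (hK_bdd : ∀ x v v', K x v v' ≤ CK) {ψ : ℝ → ℝ → ℝ}
    (hψ_supp : ∀ x : ℝ, x ∉ Icc (c - d) (c + d) → ∀ v, ψ x v = 0) {g : ℝ → ℝ → ℝ → ℝ}
    (hg : IsMildGb T K 1 ψ (fun _ _ _ => 0) g) :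
    ∀ t ∈ Icc 0 T, ∀ v ∈ ({1, -1} : Set ℝ), ∀ x ∉ Icc (c - d - (T - t)) (c + d + (T - t)),
      g t x v = 0 := by
  obtain ⟨-, ⟨C, hC⟩, hmild⟩ := hg
  have hK : ∀ x v v', K x v v' ∈ Icc 0 CK := fun x v v' => ⟨hK_nonneg x v v', hK_bdd x v v'⟩
  have hCK : 0 ≤ CK := (hK_nonneg 0 0 0).trans (hK_bdd 0 0 0)
  have hreversed : IsConeRepresentation (fun τ x v => g (T - τ) x v) T (3 * CK) c d := by
    intro τ hτ x hx v hv
    have hw : |-v| ≤ 1 := by rw [abs_neg]; exact abs_le_one_of_mem_pair hv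
    have hdatum : x + v * τ ∉ Icc (c - d) (c + d) := by
      simpa using notMem_Icc_sub_mul_of_notMem_Icc hw hτ.1 hx
    have hcov : ∀ G : ℝ → ℝ, ∫ s in (T - τ)..T, G s = ∫ r in (0 : ℝ)..τ, G (T - r) := fun G => by
      simp [intervalIntegral.integral_comp_sub_left]
    have hrep := hmild (T - τ) ⟨by linarith [hτ.2], by linarith [hτ.1]⟩ x v hv
    rw [sub_sub_cancel, hψ_supp _ hdatum, zero_add, hcov] at hrep
    refine ⟨-v, hw, _, hrep, fun r _ => ?_⟩
    have hy : x + v * (T - r - (T - τ)) = x - -v * (τ - r) := by ring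
    simp only [one_mul, add_zero, hy]
    exact abs_gain_sub_loss_le_s14 (hK ..) (hK ..) (hK ..) (hK ..) (by rcases hv with rfl | rfl <;> simp)
  intro t ht v hv x hx
  simpa using hreversed.eq_zero (by positivity)
    ⟨C, fun τ x v => hC (T - τ) x v⟩ (T - t) ⟨by linarith [ht.2], by linarith [ht.1]⟩ v hv x hx

end Kinetic

theorem finite_speed_of_propagation_general
    (T CK c d : ℝ)
    (K : ℝ → ℝ → ℝ → ℝ)
    (hK_nonneg : ∀ x v v', 0 ≤ K x v v') (hK_bdd : ∀ x v v', K x v v' ≤ CK)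
    (φ : ℝ → ℝ → ℝ)
    (hφ_supp : ∀ x : ℝ, x ∉ Set.Icc (c - d) (c + d) → ∀ v, φ x v = 0)
    (f : ℝ → ℝ → ℝ → ℝ) (hf : IsMildF T K φ (fun _ _ _ => 0) f)
    (ψ : ℝ → ℝ → ℝ)
    (hψ_supp : ∀ x : ℝ, x ∉ Set.Icc (c - d) (c + d) → ∀ v, ψ x v = 0)
    (g : ℝ → ℝ → ℝ → ℝ) (hg : IsMildGb T K 1 ψ (fun _ _ _ => 0) g) :
    (∀ t ∈ Set.Icc (0 : ℝ) T, ∀ v ∈ ({1, -1} : Set ℝ), ∀ x : ℝ,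
      x ∉ Set.Icc (c - d - t) (c + d + t) → f t x v = 0) ∧
    (∀ t ∈ Set.Icc (0 : ℝ) T, ∀ v ∈ ({1, -1} : Set ℝ), ∀ x : ℝ,
      x ∉ Set.Icc (c - d - (T - t)) (c + d + (T - t)) → g t x v = 0) := by
  exact ⟨hf.eq_zero_outside_cone hK_nonneg hK_bdd hφ_supp,
    hg.eq_zero_outside_cone hK_nonneg hK_bdd hψ_supp⟩

/-- finite speed of propagation (speed `|v| = 1`): (i) if the initial datum
`φ` vanishes outside `[c−d, c+d]`, then the forward mild solution `f(t,·,·)` vanishes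
outside `[c−d−t, c+d+t]`; (ii) if the final datum `ψ` vanishes outside `[c−d, c+d]`, then
the adjoint mild solution `g(t,·,·)` vanishes outside `[c−d−(T−t), c+d+(T−t)]`. -/
theorem finite_speed_of_propagation
    (T CK c d : ℝ) (hT : 0 < T) (hCK : 0 < CK) (hd : 0 < d)
    (K : ℝ → ℝ → ℝ → ℝ)
    (hK_nonneg : ∀ x v v', 0 ≤ K x v v') (hK_bdd : ∀ x v v', K x v v' ≤ CK)
    (φ : ℝ → ℝ → ℝ)
    (hφ_meas : Measurable fun p : ℝ × ℝ => φ p.1 p.2)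
    (hφ_bdd : ∃ C, ∀ x v, |φ x v| ≤ C)
    (hφ_supp : ∀ x : ℝ, x ∉ Set.Icc (c - d) (c + d) → ∀ v, φ x v = 0)
    (f : ℝ → ℝ → ℝ → ℝ) (hf : IsMildF T K φ (fun _ _ _ => 0) f)
    (ψ : ℝ → ℝ → ℝ)
    (hψ_meas : Measurable fun p : ℝ × ℝ => ψ p.1 p.2)
    (hψ_bdd : ∃ C, ∀ x v, |ψ x v| ≤ C)
    (hψ_supp : ∀ x : ℝ, x ∉ Set.Icc (c - d) (c + d) → ∀ v, ψ x v = 0)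
    (g : ℝ → ℝ → ℝ → ℝ) (hg : IsMildGb T K 1 ψ (fun _ _ _ => 0) g) :
    (∀ t ∈ Set.Icc (0 : ℝ) T, ∀ v ∈ ({1, -1} : Set ℝ), ∀ x : ℝ,
      x ∉ Set.Icc (c - d - t) (c + d + t) → f t x v = 0) ∧
    (∀ t ∈ Set.Icc (0 : ℝ) T, ∀ v ∈ ({1, -1} : Set ℝ), ∀ x : ℝ,
      x ∉ Set.Icc (c - d - (T - t)) (c + d + (T - t)) → g t x v = 0) :=
  finite_speed_of_propagation_general T CK c d K hK_nonneg hK_bdd φ hφ_supp f hf ψ hψ_supp g hg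
end
end
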